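/- arXiv:2604.03077 — 5 statements merged into one kernel-verified Lean document; each statement's English description precedes it below -/
import Mathlib

section
/- Let p be a polynomial of degree at most l on a d-simplex K, written in Bernstein form p = Σ_{|α|=l} c_α ∏_i λ_i^{α_i}/α_i!, and let F be a face of K with vertex index set I_F. Then the following are equivalent for q ≥ 0: (1) all derivatives of p of order ≤ q vanish on F; (2) c_α = 0 whenever Σ_{i ∉ I_F} α_i ≤ q. -/
/-!
Write `p` as the evaluation at the barycentric coordinates of the homogeneous polynomial
`φ = ∑ c_α X^α / α!` of degree `l`, and grade `φ` by the transverse degree `∑_{i ∉ I_F} α_i`.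
A monomial of transverse degree `k` is a product of `k` coordinates vanishing on `F`, so by the
Leibniz rule it vanishes to order `k` there; this gives (2) ⇒ (1).

Conversely, restrict `p` to a line `t ↦ x + t v` through a point `x` of `F`: up to `m!`, the
`t^m`-coefficient is the `m`-th derivative of `p` at `x` along `v`. Once the components of
transverse degree `< m` are known to vanish, this coefficient is the component `φ_m` of
transverse degree `m` evaluated at the point whose coordinates are those of `x` on `I_F` and those
of `v` off `I_F`. As `x` and `v` vary, these points fill the hyperplane `∑_{i ∈ I_F} λ_i = 1`,
and a homogeneous polynomial vanishing there is zero. Induction on `m` gives (1) ⇒ (2).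
-/

open MvPolynomial Finsupp
open scoped ContDiff Polynomial

section VanishingOrder

variable (𝕜 : Type*) {E A : Type*} [NontriviallyNormedField 𝕜] [NormedAddCommGroup E]
  [NormedSpace 𝕜 E] [NormedCommRing A] [NormedAlgebra 𝕜 A]

def VanishesToOrder (f : E → A) (x : E) (k : ℕ) : Prop :=
  ∀ n < k, iteratedFDeriv 𝕜 n f x = 0

variable {𝕜} {f g : E → A} {x : E}

namespace VanishesToOrder

theorem of_order_zero : VanishesToOrder 𝕜 f x 0 := fun _ h => absurd h (Nat.not_lt_zero _)

theorem of_eq_zero (h : f x = 0) : VanishesToOrder 𝕜 f x 1 := fun n hn => by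
  rw [Nat.lt_one_iff.mp hn, ← norm_eq_zero, norm_iteratedFDeriv_zero, h, norm_zero]

theorem mono {k k' : ℕ} (hf : VanishesToOrder 𝕜 f x k) (hk : k' ≤ k) :
    VanishesToOrder 𝕜 f x k' := fun n hn => hf n (hn.trans_le hk)

theorem mul (hf : ContDiff 𝕜 ∞ f) (hg : ContDiff 𝕜 ∞ g) {a b : ℕ}
    (hfa : VanishesToOrder 𝕜 f x a) (hgb : VanishesToOrder 𝕜 g x b) :
    VanishesToOrder 𝕜 (fun y => f y * g y) x (a + b) := by
  intro n hn
  have hle := norm_iteratedFDeriv_mul_le hf hg x (n := n) (mod_cast le_top)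
  -- in each term of the Leibniz formula one of the two factors is differentiated below its order
  have hterm : ∀ i ∈ Finset.range (n + 1),
      (n.choose i : ℝ) * ‖iteratedFDeriv 𝕜 i f x‖ * ‖iteratedFDeriv 𝕜 (n - i) g x‖ = 0 := by
    intro i hi
    rcases lt_or_ge i a with hia | hia
    · simp [hfa i hia]
    · have := Finset.mem_range.mp hi
      simp [hgb (n - i) (by omega)]
  rw [Finset.sum_eq_zero hterm] at hle
  exact norm_le_zero_iff.mp hle

theorem prod {ι : Type*} {g : ι → E → A} {k : ι → ℕ} (s : Finset ι)
    (hg : ∀ i ∈ s, ContDiff 𝕜 ∞ (g i)) (hgk : ∀ i ∈ s, VanishesToOrder 𝕜 (g i) x (k i)) :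
    VanishesToOrder 𝕜 (fun y => ∏ i ∈ s, g i y) x (∑ i ∈ s, k i) := by
  classical
  induction s using Finset.induction with
  | empty => exact fun n hn => absurd hn (by simp)
  | insert a s has ih =>
    simp only [Finset.prod_insert has, Finset.sum_insert has]
    simp only [Finset.forall_mem_insert] at hg hgk
    exact mul hg.1 (contDiff_prod hg.2) hgk.1 (ih hg.2 hgk.2)

theorem pow (hf : ContDiff 𝕜 ∞ f) {k : ℕ} (hfk : VanishesToOrder 𝕜 f x k) (m : ℕ) :
    VanishesToOrder 𝕜 (fun y => f y ^ m) x (m * k) := by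
  simpa using prod (g := fun _ => f) (k := fun _ => k) (Finset.range m) (fun _ _ => hf)
    (fun _ _ => hfk)

theorem sum {ι : Type*} {g : ι → E → A} {k : ℕ} (s : Finset ι)
    (hg : ∀ i ∈ s, ContDiff 𝕜 ∞ (g i)) (hgk : ∀ i ∈ s, VanishesToOrder 𝕜 (g i) x k) :
    VanishesToOrder 𝕜 (fun y => ∑ i ∈ s, g i y) x k := fun n hn => by
  rw [iteratedFDeriv_fun_sum_apply fun i hi => (hg i hi).contDiffAt.of_le (mod_cast le_top)]
  exact Finset.sum_eq_zero fun i hi => hgk i hi n hn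

end VanishesToOrder

end VanishingOrder

namespace MvPolynomial.IsHomogeneous

theorem eval_smul {R σ : Type*} [CommSemiring R] {φ : MvPolynomial σ R} {n : ℕ}
    (hφ : φ.IsHomogeneous n) (r : R) (y : σ → R) : eval (r • y) φ = r ^ n * eval y φ := by
  rw [eval_eq, eval_eq, Finset.mul_sum]
  refine Finset.sum_congr rfl fun d hd => ?_
  rw [← hφ (mem_support_iff.mp hd), weight_apply, Finsupp.sum]
  simp only [Pi.smul_apply, smul_eq_mul, mul_pow, Finset.prod_mul_distrib,
    Finset.prod_pow_eq_pow_sum, Pi.one_apply, mul_one]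
  ring

theorem weightedHomogeneousComponent {R σ : Type*} [CommSemiring R] {φ : MvPolynomial σ R}
    {n : ℕ} (hφ : φ.IsHomogeneous n) (v : σ → ℕ) (m : ℕ) :
    (weightedHomogeneousComponent v m φ).IsHomogeneous n := fun d hd => by
  rw [coeff_weightedHomogeneousComponent] at hd
  split_ifs at hd
  exacts [hφ hd, absurd rfl hd]

theorem eq_zero_of_eval_eq_zero_of_sum_eq_one {K σ : Type*} [Field K] [Infinite K]
    [DecidableEq σ] {φ : MvPolynomial σ K} {n : ℕ} (hφ : φ.IsHomogeneous n) {s : Finset σ}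
    (hs : s.Nonempty) (h : ∀ y : σ → K, ∑ i ∈ s, y i = 1 → eval y φ = 0) : φ = 0 := by
  set L : MvPolynomial σ K := ∑ i ∈ s, X i
  have hL : ∀ y, eval y L = ∑ i ∈ s, y i := by simp [L]
  -- `φ` vanishes off the hyperplane `L = 0` by homogeneity, so `φ * L` vanishes everywhere
  have hφL : φ * L = 0 := MvPolynomial.funext fun y => by
    rw [map_mul, map_zero, hL]
    by_cases hy : ∑ i ∈ s, y i = 0
    · rw [hy, mul_zero]
    have hy' : y = (∑ i ∈ s, y i) • ((∑ i ∈ s, y i)⁻¹ • y) := by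
      rw [smul_smul, mul_inv_cancel₀ hy, one_smul]
    rw [hy', hφ.eval_smul, h, mul_zero, zero_mul]
    simp [← Finset.mul_sum, inv_mul_cancel₀ hy]
  obtain ⟨i₀, hi₀⟩ := hs
  have hL0 : L ≠ 0 := fun h0 => by
    simpa [hi₀, h0] using hL (Pi.single i₀ 1)
  exact (mul_eq_zero.mp hφL).resolve_right hL0

end MvPolynomial.IsHomogeneous

section Transverse

variable {ι : Type*} [DecidableEq ι]

def transverseWeight (s : Finset ι) : ι → ℕ := fun i => if i ∈ s then 0 else 1

theorem weight_transverseWeight [Fintype ι] (s : Finset ι) (d : ι →₀ ℕ) :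
    weight (transverseWeight s) d = ∑ i ∈ sᶜ, d i := by
  simp [weight_eq_sum, transverseWeight, Finset.sum_ite, Finset.compl_eq_univ_sdiff,
    Finset.filter_not]

end Transverse

section LineRestrict

variable {R ι : Type*} [CommSemiring R]

noncomputable def lineRestrict (w u : ι → R) : MvPolynomial ι R →ₐ[R] R[X] :=
  aeval fun i => Polynomial.C (w i) + Polynomial.C (u i) * Polynomial.X

theorem eval_lineRestrict (w u : ι → R) (φ : MvPolynomial ι R) (t : R) :
    (lineRestrict w u φ).eval t = eval (w + t • u) φ := by
  rw [← Polynomial.coe_aeval_eq_eval, lineRestrict, ← AlgHom.comp_apply, comp_aeval]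
  change eval _ φ = _
  congr 2
  funext i
  simp only [map_add, map_mul, Polynomial.aeval_C, Polynomial.aeval_X, Pi.add_apply,
    Pi.smul_apply, smul_eq_mul, Algebra.algebraMap_self, RingHom.id_apply]
  ring

variable [Fintype ι] [DecidableEq ι] {s : Finset ι} {w u : ι → R}

theorem lineRestrict_monomial (hw : ∀ i ∉ s, w i = 0) (d : ι →₀ ℕ) (a : R) :
    lineRestrict w u (monomial d a) = Polynomial.X ^ weight (transverseWeight s) d *
      (Polynomial.C a * ∏ i, (if i ∈ s then Polynomial.C (w i) + Polynomial.C (u i) * Polynomial.X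
        else Polynomial.C (u i)) ^ d i) := by
  rw [lineRestrict, aeval_monomial, Finsupp.prod_fintype _ _ (fun _ => pow_zero _), weight_eq_sum,
    ← Finset.prod_pow_eq_pow_sum, Polynomial.algebraMap_eq, mul_left_comm,
    ← Finset.prod_mul_distrib]
  congr 1
  refine Finset.prod_congr rfl fun i _ => ?_
  by_cases hi : i ∈ s
  · simp [transverseWeight, hi]
  · simp only [transverseWeight, hi, hw i hi, if_false, smul_eq_mul, mul_one, map_zero, zero_add]
    ring

theorem coeff_lineRestrict_monomial_of_lt (hw : ∀ i ∉ s, w i = 0) (d : ι →₀ ℕ) (a : R) {n : ℕ}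
    (hn : n < weight (transverseWeight s) d) : (lineRestrict w u (monomial d a)).coeff n = 0 := by
  rw [lineRestrict_monomial hw, Polynomial.coeff_X_pow_mul', if_neg (not_le.mpr hn)]

theorem coeff_lineRestrict_monomial_weight (hw : ∀ i ∉ s, w i = 0) (d : ι →₀ ℕ) (a : R) :
    (lineRestrict w u (monomial d a)).coeff (weight (transverseWeight s) d) =
      eval (s.piecewise w u) (monomial d a) := by
  rw [lineRestrict_monomial hw, Polynomial.coeff_X_pow_mul', if_pos le_rfl, Nat.sub_self,
    Polynomial.coeff_zero_eq_eval_zero, eval_monomial,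
    Finsupp.prod_fintype _ _ (fun _ => pow_zero _)]
  simp [Polynomial.eval_prod, Finset.piecewise, apply_ite]

theorem coeff_lineRestrict_of_forall_lt (hw : ∀ i ∉ s, w i = 0) {φ : MvPolynomial ι R} {m : ℕ}
    (hlow : ∀ d, weight (transverseWeight s) d < m → coeff d φ = 0) :
    (lineRestrict w u φ).coeff m =
      eval (s.piecewise w u) (weightedHomogeneousComponent (transverseWeight s) m φ) := by
  conv_lhs => rw [φ.as_sum]
  rw [map_sum, Polynomial.finsetSum_coeff, weightedHomogeneousComponent_apply, map_sum,
    Finset.sum_filter]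
  refine Finset.sum_congr rfl fun d _ => ?_
  rcases lt_trichotomy (weight (transverseWeight s) d) m with h | rfl | h
  · rw [hlow d h, monomial_zero, map_zero, Polynomial.coeff_zero, if_neg h.ne]
  · rw [if_pos rfl, coeff_lineRestrict_monomial_weight hw]
  · rw [if_neg h.ne', coeff_lineRestrict_monomial_of_lt hw _ _ h]

theorem coeff_eq_zero_of_coeff_lineRestrict_eq_zero {K : Type*} [Field K] [Infinite K]
    {φ : MvPolynomial ι K} {l q : ℕ} (hφ : φ.IsHomogeneous l) (hs : s.Nonempty)
    (h : ∀ n ≤ q, ∀ w u : ι → K, (∀ i ∉ s, w i = 0) → ∑ i, w i = 1 → ∑ i, u i = 0 →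
      (lineRestrict w u φ).coeff n = 0)
    {d : ι →₀ ℕ} (hd : weight (transverseWeight s) d ≤ q) : coeff d φ = 0 := by
  have hcoeff : ∀ d, coeff d φ = coeff d
      (weightedHomogeneousComponent (transverseWeight s) (weight (transverseWeight s) d) φ) :=
    fun d => by rw [coeff_weightedHomogeneousComponent, if_pos rfl]
  suffices hcomp : ∀ m ≤ q, weightedHomogeneousComponent (transverseWeight s) m φ = 0 by
    rw [hcoeff, hcomp _ hd, coeff_zero]
  intro m
  induction m using Nat.strong_induction_on with
  | _ m ih =>
  intro hmq
  refine (hφ.weightedHomogeneousComponent _ m).eq_zero_of_eval_eq_zero_of_sum_eq_one hs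
    fun y hy => ?_
  obtain ⟨i₀, hi₀⟩ := hs
  -- `y` is reached as `s.piecewise w u` with `w` on the face and `u` summing to zero
  set w := s.piecewise y 0
  set u := sᶜ.piecewise y 0 - Pi.single i₀ (∑ i ∈ sᶜ, y i)
  have hw : ∀ i ∉ s, w i = 0 := fun i hi => by simp [w, hi]
  have hwu : s.piecewise w u = y := by
    ext i
    by_cases hi : i ∈ s
    · simp [w, hi]
    · simp [u, hi, show i ≠ i₀ from fun h => hi (h ▸ hi₀)]
  have hw1 : ∑ i, w i = 1 := by simp [w, Finset.sum_piecewise, hy]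
  have hu0 : ∑ i, u i = 0 := by simp [u, Finset.sum_piecewise]
  rw [← hwu, ← coeff_lineRestrict_of_forall_lt hw fun d hd => by
    rw [hcoeff, ih _ hd (by omega), coeff_zero]]
  exact h m hmq w u hw hw1 hu0

end LineRestrict

section Calculus

variable {𝕜 E F A ι : Type*} [NontriviallyNormedField 𝕜] [NormedAddCommGroup E]
  [NormedSpace 𝕜 E] [NormedAddCommGroup F] [NormedSpace 𝕜 F] [NormedCommRing A]
  [NormedAlgebra 𝕜 A]

theorem contDiff_eval_comp {n : WithTop ℕ∞} {g : ι → E → A} (hg : ∀ i, ContDiff 𝕜 n (g i))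
    (φ : MvPolynomial ι A) : ContDiff 𝕜 n fun y => eval (fun i => g i y) φ := by
  induction φ using MvPolynomial.induction_on with
  | C a => simpa using contDiff_const
  | add φ ψ hφ hψ => simpa using hφ.add hψ
  | mul_X φ i hφ => simpa using hφ.mul (hg i)

theorem vanishesToOrder_eval_comp [DecidableEq ι] {g : ι → E → A}
    (hg : ∀ i, ContDiff 𝕜 ∞ (g i)) {s : Finset ι} {x : E} (hx : ∀ i ∉ s, g i x = 0)
    {φ : MvPolynomial ι A} {q : ℕ}
    (hφ : ∀ d, weight (transverseWeight s) d ≤ q → coeff d φ = 0) :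
    VanishesToOrder 𝕜 (fun y => eval (fun i => g i y) φ) x (q + 1) := by
  simp only [eval_eq]
  refine VanishesToOrder.sum _
    (fun d _ => contDiff_const.mul (contDiff_prod fun i _ => (hg i).pow _)) fun d hd => ?_
  have hq : q + 1 ≤ weight (transverseWeight s) d := by
    by_contra! h
    exact MvPolynomial.mem_support_iff.mp hd (hφ d (by omega))
  have hprod : VanishesToOrder 𝕜 (fun y => ∏ i ∈ d.support, g i y ^ d i) x
      (∑ i ∈ d.support, d i * transverseWeight s i) := by
    refine VanishesToOrder.prod _ (fun i _ => (hg i).pow _) fun i _ => ?_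
    unfold transverseWeight
    split_ifs with hi
    · exact VanishesToOrder.of_order_zero
    · exact (VanishesToOrder.of_eq_zero (hx i hi)).pow (hg i) _
  have hweight : ∑ i ∈ d.support, d i * transverseWeight s i = weight (transverseWeight s) d := by
    simp [weight_apply, Finsupp.sum]
  simpa using (VanishesToOrder.of_order_zero.mul contDiff_const
    (contDiff_prod fun i _ => (hg i).pow _) hprod).mono (by omega)

theorem iteratedDeriv_comp_add_smul {n : WithTop ℕ∞} {f : E → F} (hf : ContDiff 𝕜 n f)
    (x v : E) (t : 𝕜) {m : ℕ} (hm : m ≤ n) :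
    iteratedDeriv m (fun t => f (x + t • v)) t = iteratedFDeriv 𝕜 m f (x + t • v) fun _ => v := by
  have hcomp : (fun t : 𝕜 => f (x + t • v)) =
      (fun y => f (x + y)) ∘ ContinuousLinearMap.smulRight (1 : 𝕜 →L[𝕜] 𝕜) v := by
    ext t; simp
  rw [iteratedDeriv_eq_iteratedFDeriv, hcomp, ContinuousLinearMap.iteratedFDeriv_comp_right _
    (f := fun y => f (x + y)) (hf.comp (contDiff_const.add contDiff_id)) _ hm]
  simp [iteratedFDeriv_comp_add_left]

theorem Polynomial.iteratedDeriv_eval_zero (Q : 𝕜[X]) (n : ℕ) :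
    iteratedDeriv n (fun t => Q.eval t) 0 = n.factorial * Q.coeff n := by
  have hiter : ∀ n, iteratedDeriv n (fun t => Q.eval t) =
      fun t => (Polynomial.derivative^[n] Q).eval t := by
    intro n
    induction n with
    | zero => simp
    | succ n ih =>
      ext t
      rw [iteratedDeriv_succ, ih, Polynomial.deriv, Function.iterate_succ_apply']
  simp only [hiter, ← Polynomial.coeff_zero_eq_eval_zero, Polynomial.coeff_iterate_derivative]
  simp [Nat.descFactorial_self]

end Calculus

section Simplex

variable {ι E : Type*} [Fintype ι] [NormedAddCommGroup E] [NormedSpace ℝ E]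

theorem AffineBasis.contDiff_coord (b : AffineBasis ι ℝ E) (i : ι) {n : WithTop ℕ∞} :
    ContDiff ℝ n (b.coord i) :=
  have := b.finiteDimensional
  (⟨b.coord i, (b.coord i).continuous_of_finiteDimensional⟩ : E →ᴬ[ℝ] ℝ).contDiff

theorem AffineBasis.coeff_lineRestrict_eq_zero (b : AffineBasis ι ℝ E) (φ : MvPolynomial ι ℝ)
    {w u : ι → ℝ} (hw : ∑ i, w i = 1) (hu : ∑ i, u i = 0) {n : ℕ}
    (h : iteratedFDeriv ℝ n (fun y => eval (fun i => b.coord i y) φ)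
      (Finset.univ.affineCombination ℝ b w) = 0) :
    (lineRestrict w u φ).coeff n = 0 := by
  set x := Finset.univ.affineCombination ℝ b w
  set y := Finset.univ.affineCombination ℝ b (w + u)
  have hwu : ∑ i, (w + u) i = 1 := by simp [Finset.sum_add_distrib, hw, hu]
  have hcoord : ∀ (t : ℝ) i, b.coord i (x + t • (y - x)) = (w + t • u) i := fun t i => by
    have hvadd : x + t • (y - x) = t • (y -ᵥ x) +ᵥ x := by
      rw [vadd_eq_add, vsub_eq_sub, add_comm]
    rw [hvadd, AffineMap.map_vadd, LinearMap.map_smul, AffineMap.linearMap_vsub,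
      b.coord_apply_combination_of_mem (Finset.mem_univ i) hw,
      b.coord_apply_combination_of_mem (Finset.mem_univ i) hwu]
    simp only [Pi.add_apply, Pi.smul_apply, vsub_eq_sub, vadd_eq_add, smul_eq_mul]
    ring
  have hline : (fun t => (lineRestrict w u φ).eval t) =
      fun t => eval (fun i => b.coord i (x + t • (y - x))) φ := by
    simp only [eval_lineRestrict, hcoord]
  have hderiv := Polynomial.iteratedDeriv_eval_zero (lineRestrict w u φ) n
  rw [hline, iteratedDeriv_comp_add_smul (contDiff_eval_comp (fun i => b.contDiff_coord i) φ)
    _ _ _ (mod_cast le_top : (n : WithTop ℕ∞) ≤ ∞), zero_smul, add_zero, h] at hderiv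
  simpa [Nat.factorial_ne_zero] using hderiv.symm

end Simplex

section BernsteinForm

variable {K : Type*} [Field K]

noncomputable def bernsteinForm (k l : ℕ) (c : (Fin k → ℕ) → K) : MvPolynomial (Fin k) K :=
  ∑ α ∈ Finset.Nat.antidiagonalTuple k l,
    monomial (equivFunOnFinite.symm α) (c α / ∏ i, ((α i).factorial : K))

variable {k l : ℕ} {c : (Fin k → ℕ) → K}

theorem eval_bernsteinForm (x : Fin k → K) :
    eval x (bernsteinForm k l c) = ∑ α ∈ Finset.Nat.antidiagonalTuple k l,
      c α * ∏ i, x i ^ α i / ((α i).factorial : K) := by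
  simp only [bernsteinForm, map_sum, eval_monomial,
    Finsupp.prod_fintype _ _ (fun _ => pow_zero _), coe_equivFunOnFinite_symm, div_eq_mul_inv,
    Finset.prod_mul_distrib, Finset.prod_inv_distrib]
  exact Finset.sum_congr rfl fun α _ => by ring

theorem isHomogeneous_bernsteinForm : (bernsteinForm k l c).IsHomogeneous l :=
  IsHomogeneous.sum _ _ _ fun α hα => isHomogeneous_monomial _ <| by
    rw [degree_eq_sum, ← (Finset.Nat.mem_antidiagonalTuple.mp hα)]
    rfl

theorem coeff_bernsteinForm (d : Fin k →₀ ℕ) :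
    coeff d (bernsteinForm k l c) = if ⇑d ∈ Finset.Nat.antidiagonalTuple k l then
      c d / ∏ i, ((d i).factorial : K) else 0 := by
  rw [bernsteinForm, coeff_sum]
  simp only [coeff_monomial, Equiv.symm_apply_eq]
  rw [Finset.sum_ite_eq']
  rfl

end BernsteinForm

/-- For a polynomial `p = ∑_{|α|=l} c_α ∏_i λ_i^{α_i}/α_i!` in Bernstein form on a `d`-simplex
and a face `F` with vertex index set `I_F`, the following are equivalent for `q ≥ 0`:
(1) all derivatives of `p` of order `≤ q` vanish on `F`;
(2) `c_α = 0` whenever `∑_{i ∉ I_F} α_i ≤ q`. -/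
theorem stmt7 (d l q : ℕ)
    (b : AffineBasis (Fin (d + 1)) ℝ (EuclideanSpace ℝ (Fin d)))
    (IF : Finset (Fin (d + 1))) (hIF : IF.Nonempty)
    (c : (Fin (d + 1) → ℕ) → ℝ) (p : EuclideanSpace ℝ (Fin d) → ℝ)
    (hp : ∀ x, p x = ∑ α ∈ Finset.Nat.antidiagonalTuple (d + 1) l,
      c α * ∏ i, (b.coord i x) ^ (α i) / ((α i).factorial : ℝ)) :
    (∀ n, n ≤ q → ∀ x : EuclideanSpace ℝ (Fin d),
        (∀ i ∉ IF, b.coord i x = 0) → iteratedFDeriv ℝ n p x = 0) ↔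
      (∀ α ∈ Finset.Nat.antidiagonalTuple (d + 1) l,
        (∑ i ∈ IFᶜ, α i) ≤ q → c α = 0) := by
  classical
  set φ := bernsteinForm (d + 1) l c
  obtain rfl : p = fun x => eval (fun i => b.coord i x) φ :=
    funext fun x => by rw [hp, eval_bernsteinForm]
  constructor
  · intro H α hα hq
    have hcoeff := coeff_eq_zero_of_coeff_lineRestrict_eq_zero isHomogeneous_bernsteinForm hIF
      (fun n hn w u hw hw1 hu => b.coeff_lineRestrict_eq_zero φ hw1 hu <| H n hn _ fun i hi => by
        rw [b.coord_apply_combination_of_mem (Finset.mem_univ i) hw1, hw i hi])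
      (d := equivFunOnFinite.symm α) (by rwa [weight_transverseWeight])
    rw [coeff_bernsteinForm, coe_equivFunOnFinite_symm, if_pos hα, div_eq_zero_iff] at hcoeff
    exact hcoeff.resolve_right (Finset.prod_ne_zero_iff.mpr fun i _ => by positivity)
  · intro H n hn x hx
    refine vanishesToOrder_eval_comp (fun i => b.contDiff_coord i) hx (fun e he => ?_) n
      (Nat.lt_succ_of_le hn)
    rw [coeff_bernsteinForm]
    split_ifs with heT
    · rw [H _ heT (by rwa [weight_transverseWeight] at he), zero_div]
    · rfl
end

section
/- Let p ∈ P_ρ(K) and let Q_k^ρ be the Alfeld-split lifting operator with b = k − ρ ≥ 1. Then for each j ∈ {0, ..., d} and each 0 ≤ n ≤ ρ, the n-th derivative of Q_k^ρ(p)|_{K_j} at the split point V_A equals ((ρ−n)!/(k−n)!) times the n-th derivative of p at V_A. In particular, ∇^n Q_k^ρ(p) is single-valued at V_A for 0 ≤ n ≤ ρ. -/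
/-! In the barycentric coordinates `λ_i` of `K_j` the split point `V_A` is the vertex `j`:
`λ_j = 1` and `λ_i = 0` for `i ≠ j` there. Writing `λ_j = 1 + (λ_j - 1)` and expanding, the
monomial `λ_j ^ A ∏_{i ≠ j} λ_i ^ β_i` becomes a combination of products of `r + m` affine forms
vanishing at `V_A` (`m = ∑_{i ≠ j} β_i`), and such a product has vanishing `n`-th derivative at
`V_A` unless `r + m = n`. Only `r = t := n - m` survives, with coefficient `A.choose t`, so
`(A - t)! • ∇ⁿ(λ_j ^ A / A! ∏_{i ≠ j} λ_i ^ β_i / β_i!)(V_A)` does not depend on `A`. Taking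
`A = β_j + b` and `A = β_j` gives the factors `(k - n)!` and `(ρ - n)!`. -/

open Finset
open scoped Nat

section IteratedFDeriv

variable {𝕜 : Type*} [NontriviallyNormedField 𝕜] {E : Type*} [NormedAddCommGroup E]
  [NormedSpace 𝕜 E] {ι : Type*} [Fintype ι]

theorem iteratedFDeriv_const_mul_apply {f : E → 𝕜} {n : ℕ} {x : E} (c : 𝕜)
    (hf : ContDiffAt 𝕜 n f x) :
    iteratedFDeriv 𝕜 n (fun y => c * f y) x = c • iteratedFDeriv 𝕜 n f x := by
  simpa only [smul_eq_mul] using iteratedFDeriv_const_smul_apply' (a := c) hf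

theorem iteratedFDeriv_sum_mul_apply {α : Type*} {s : Finset α} {f : α → E → 𝕜} (c : α → 𝕜)
    {n : ℕ} (hf : ∀ a ∈ s, ContDiff 𝕜 n (f a)) (x : E) :
    iteratedFDeriv 𝕜 n (fun y => ∑ a ∈ s, c a * f a y) x =
      ∑ a ∈ s, c a • iteratedFDeriv 𝕜 n (f a) x := by
  rw [iteratedFDeriv_sum fun a ha => contDiff_const.mul (hf a ha), Finset.sum_apply]
  exact Finset.sum_congr rfl fun a ha => iteratedFDeriv_const_mul_apply (c a) (hf a ha).contDiffAt

theorem ContinuousMultilinearMap.iteratedFDeriv_comp_diagonal_zero_eq_zero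
    (M : ContinuousMultilinearMap 𝕜 (fun _ : ι => E) 𝕜) {n : ℕ} (hn : n ≠ Fintype.card ι) :
    iteratedFDeriv 𝕜 n (fun v => M fun _ => v) 0 = 0 := by
  classical
  have hM : iteratedFDeriv 𝕜 n M 0 = 0 := by
    rw [M.iteratedFDeriv_eq, ContinuousMultilinearMap.iteratedFDeriv]
    refine sum_eq_zero fun e _ => ?_
    -- `e` is not a bijection, so `M` receives `0` in a slot outside its range
    obtain ⟨a, ha⟩ : ∃ a, a ∉ Set.range e := by
      by_contra! h
      exact hn (le_antisymm (by simpa using Fintype.card_le_of_embedding e)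
        (by simpa using Fintype.card_le_of_surjective e h))
    have : Nonempty {a // a ∉ Set.range e} := ⟨⟨a, ha⟩⟩
    rw [ContinuousLinearMap.map_zero]
    exact (M.iteratedFDerivComponent e.toEquivRange).map_zero
  change iteratedFDeriv 𝕜 n (M ∘ ContinuousLinearMap.pi fun _ => ContinuousLinearMap.id 𝕜 E) 0 = 0
  rw [ContinuousLinearMap.iteratedFDeriv_comp_right _ M.contDiff _ le_top,
    ContinuousLinearMap.map_zero, hM]
  rfl

theorem iteratedFDeriv_prod_sub_eq_zero (L : ι → E →L[𝕜] 𝕜) (x₀ : E) {n : ℕ}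
    (hn : n ≠ Fintype.card ι) :
    iteratedFDeriv 𝕜 n (fun x => ∏ t, L t (x - x₀)) x₀ = 0 := by
  rw [iteratedFDeriv_comp_sub (f := fun v => ∏ t, L t v), sub_self]
  simpa using ((ContinuousMultilinearMap.mkPiAlgebra 𝕜 ι 𝕜).compContinuousLinearMap L)
    |>.iteratedFDeriv_comp_diagonal_zero_eq_zero hn

theorem iteratedFDeriv_prod_pow_sub_eq_zero (L : ι → E →L[𝕜] 𝕜) (γ : ι → ℕ) (x₀ : E) {n : ℕ}
    (hn : n ≠ ∑ i, γ i) :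
    iteratedFDeriv 𝕜 n (fun x => ∏ i, L i (x - x₀) ^ γ i) x₀ = 0 := by
  have h := iteratedFDeriv_prod_sub_eq_zero (fun t : (Σ i, Fin (γ i)) => L t.1) x₀
    (by simpa using hn)
  simpa [← univ_sigma_univ, prod_sigma] using h

end IteratedFDeriv

section Vertex

variable {E : Type*} [NormedAddCommGroup E] [NormedSpace ℝ E] [FiniteDimensional ℝ E]
  {ι : Type*} [Fintype ι]

@[fun_prop]
theorem AffineMap.contDiff_of_finiteDimensional (ℓ : E →ᵃ[ℝ] ℝ) {n : WithTop ℕ∞} :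
    ContDiff ℝ n ℓ :=
  (⟨ℓ, ℓ.continuous_of_finiteDimensional⟩ : E →ᴬ[ℝ] ℝ).contDiff

theorem iteratedFDeriv_prod_pow_affine_sub_eq_zero (ℓ : ι → E →ᵃ[ℝ] ℝ) (γ : ι → ℕ) (x₀ : E)
    {n : ℕ} (hn : n ≠ ∑ i, γ i) :
    iteratedFDeriv ℝ n (fun x => ∏ i, (ℓ i x - ℓ i x₀) ^ γ i) x₀ = 0 := by
  have hlin : ∀ i x, ℓ i x - ℓ i x₀ = (ℓ i).linear (x - x₀) :=
    fun i x => ((ℓ i).linearMap_vsub x x₀).symm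
  simp only [hlin]
  exact iteratedFDeriv_prod_pow_sub_eq_zero (fun i => (ℓ i).linear.toContinuousLinearMap) γ x₀ hn

variable [DecidableEq ι] (ℓ : ι → E →ᵃ[ℝ] ℝ) {j : ι} {x₀ : E}
  (hℓ : ∀ i, ℓ i x₀ = if i = j then 1 else 0) (β : ι → ℕ)
include hℓ

theorem iteratedFDeriv_sub_one_pow_mul_prod_eq_zero {r n : ℕ}
    (hn : r + ∑ i ∈ univ.erase j, β i ≠ n) :
    iteratedFDeriv ℝ n (fun x => (ℓ j x - 1) ^ r * ∏ i ∈ univ.erase j, ℓ i x ^ β i) x₀ = 0 := by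
  convert iteratedFDeriv_prod_pow_affine_sub_eq_zero ℓ (Function.update β j r) x₀ (n := n) ?_
    using 3 with x
  · rw [← mul_prod_erase univ _ (mem_univ j)]
    congr 1
    · simp [hℓ]
    · refine prod_congr rfl fun i hi => ?_
      simp [hℓ, ne_of_mem_erase hi]
  · rw [← add_sum_erase univ _ (mem_univ j), Function.update_self]
    rw [sum_congr rfl fun i hi => Function.update_of_ne (ne_of_mem_erase hi) r β]
    exact hn.symm

theorem iteratedFDeriv_pow_mul_prod_eq_choose_smul (A n : ℕ) :
    iteratedFDeriv ℝ n (fun x => ℓ j x ^ A * ∏ i ∈ univ.erase j, ℓ i x ^ β i) x₀ =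
      (A.choose (n - ∑ i ∈ univ.erase j, β i) : ℝ) • iteratedFDeriv ℝ n
        (fun x => (ℓ j x - 1) ^ (n - ∑ i ∈ univ.erase j, β i) *
          ∏ i ∈ univ.erase j, ℓ i x ^ β i) x₀ := by
  have hexp : (fun x => ℓ j x ^ A * ∏ i ∈ univ.erase j, ℓ i x ^ β i) = fun x =>
      ∑ r ∈ range (A + 1), (A.choose r : ℝ) *
        ((ℓ j x - 1) ^ r * ∏ i ∈ univ.erase j, ℓ i x ^ β i) := by
    funext x
    rw [← sub_add_cancel (ℓ j x) 1, add_pow, sum_mul, add_sub_cancel_right]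
    exact sum_congr rfl fun r _ => by ring
  rw [hexp, iteratedFDeriv_sum_mul_apply _ fun r _ => by fun_prop]
  refine sum_eq_single _ (fun r _ hr => ?_) fun hr => ?_
  · rw [iteratedFDeriv_sub_one_pow_mul_prod_eq_zero ℓ hℓ β (by omega), smul_zero]
  · rw [Nat.choose_eq_zero_of_lt (by simp only [mem_range] at hr; omega), Nat.cast_zero, zero_smul]

theorem factorial_smul_iteratedFDeriv_pow_div_mul_prod {A n : ℕ}
    (hA : n ≤ A + ∑ i ∈ univ.erase j, β i) :
    ((A + ∑ i ∈ univ.erase j, β i - n)! : ℝ) • iteratedFDeriv ℝ n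
        (fun x => ℓ j x ^ A / A ! * ∏ i ∈ univ.erase j, ℓ i x ^ β i / (β i)!) x₀ =
      (((n - ∑ i ∈ univ.erase j, β i)! * ∏ i ∈ univ.erase j, (β i)! : ℕ) : ℝ)⁻¹ •
        iteratedFDeriv ℝ n (fun x => (ℓ j x - 1) ^ (n - ∑ i ∈ univ.erase j, β i) *
          ∏ i ∈ univ.erase j, ℓ i x ^ β i) x₀ := by
  set m := ∑ i ∈ univ.erase j, β i
  have hfun : (fun x => ℓ j x ^ A / A ! * ∏ i ∈ univ.erase j, ℓ i x ^ β i / (β i)!) =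
      fun x => ((A ! * ∏ i ∈ univ.erase j, (β i)! : ℕ) : ℝ)⁻¹ *
        (ℓ j x ^ A * ∏ i ∈ univ.erase j, ℓ i x ^ β i) := by
    funext x
    rw [prod_div_distrib]
    push_cast
    ring
  rw [hfun, iteratedFDeriv_const_mul_apply _ (by fun_prop),
    iteratedFDeriv_pow_mul_prod_eq_choose_smul ℓ hℓ, smul_smul, smul_smul]
  rcases le_or_gt m n with hmn | hnm
  · obtain ⟨t, rfl⟩ := Nat.exists_eq_add_of_le hmn
    have htA : t ≤ A := by omega
    rw [Nat.add_sub_cancel_left, show A + m - (m + t) = A - t by omega]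
    congr 1
    have hchoose : (A.choose t : ℝ) ≠ 0 := by exact_mod_cast (Nat.choose_pos htA).ne'
    rw [← Nat.choose_mul_factorial_mul_factorial htA]
    push_cast
    field_simp
  · rw [Nat.sub_eq_zero_of_le hnm.le,
      iteratedFDeriv_sub_one_pow_mul_prod_eq_zero ℓ hℓ β (by omega), smul_zero, smul_zero]

end Vertex

theorem stmt9_general (d ρ k bnum : ℕ) (hk : k = ρ + bnum)
    (b : AffineBasis (Fin (d + 1)) ℝ (EuclideanSpace ℝ (Fin d)))
    (VA : EuclideanSpace ℝ (Fin d))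
    (bj : Fin (d + 1) → AffineBasis (Fin (d + 1)) ℝ (EuclideanSpace ℝ (Fin d)))
    (hbj : ∀ j i, bj j i = if i = j then VA else b i)
    (p : EuclideanSpace ℝ (Fin d) → ℝ)
    (c : Fin (d + 1) → (Fin (d + 1) → ℕ) → ℝ)
    (hp : ∀ j x, p x = ∑ β ∈ Finset.Nat.antidiagonalTuple (d + 1) ρ,
      c j β * ∏ i, ((bj j).coord i x) ^ (β i) / ((β i).factorial : ℝ))
    (Qp : Fin (d + 1) → EuclideanSpace ℝ (Fin d) → ℝ)
    (hQp : ∀ j x, Qp j x = ∑ β ∈ Finset.Nat.antidiagonalTuple (d + 1) ρ,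
      c j β * (((bj j).coord j x) ^ (β j + bnum) / ((β j + bnum).factorial : ℝ) *
        ∏ i ∈ Finset.univ.erase j, ((bj j).coord i x) ^ (β i) / ((β i).factorial : ℝ))) :
    (∀ j, ∀ n, n ≤ ρ →
      iteratedFDeriv ℝ n (Qp j) VA =
        (((ρ - n).factorial : ℝ) / ((k - n).factorial : ℝ)) • iteratedFDeriv ℝ n p VA) ∧
    (∀ j j', ∀ n, n ≤ ρ →
      iteratedFDeriv ℝ n (Qp j) VA = iteratedFDeriv ℝ n (Qp j') VA) := by
  have main : ∀ j, ∀ n, n ≤ ρ → iteratedFDeriv ℝ n (Qp j) VA =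
      (((ρ - n)! : ℝ) / ((k - n)! : ℝ)) • iteratedFDeriv ℝ n p VA := by
    intro j n hn
    have hℓ : ∀ i, (bj j).coord i VA = if i = j then 1 else 0 := fun i => by
      simpa [hbj] using (bj j).coord_apply i j
    have hp' : p = fun x => ∑ β ∈ Finset.Nat.antidiagonalTuple (d + 1) ρ, c j β *
        ((bj j).coord j x ^ β j / (β j)! *
          ∏ i ∈ univ.erase j, (bj j).coord i x ^ β i / (β i)!) :=
      funext fun x => by
        rw [hp j x]
        exact sum_congr rfl fun β _ => by
          rw [mul_prod_erase univ (fun i => (bj j).coord i x ^ β i / (β i)!) (mem_univ j)]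
    rw [funext (hQp j), hp', iteratedFDeriv_sum_mul_apply _ (fun _ _ => by fun_prop),
      iteratedFDeriv_sum_mul_apply _ (fun _ _ => by fun_prop), smul_sum]
    refine sum_congr rfl fun β hβ => ?_
    have hρ : β j + ∑ i ∈ univ.erase j, β i = ρ := by
      rw [add_sum_erase _ _ (mem_univ j)]; exact Finset.Nat.mem_antidiagonalTuple.mp hβ
    have hQ := factorial_smul_iteratedFDeriv_pow_div_mul_prod _ hℓ β (A := β j + bnum) (n := n)
      (by omega)
    have hP := factorial_smul_iteratedFDeriv_pow_div_mul_prod _ hℓ β (A := β j) (n := n)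
      (by omega)
    -- `hQ` becomes `(k - n)! • ∇ⁿ(term of Qp j) = (ρ - n)! • ∇ⁿ(term of p)` at `VA`
    rw [show β j + bnum + ∑ i ∈ univ.erase j, β i - n = k - n by omega, ← hP, hρ] at hQ
    rw [smul_comm, div_eq_inv_mul, mul_smul, ← hQ, inv_smul_smul₀ (by positivity)]
  exact ⟨main, fun j j' n hn => by rw [main j n hn, main j' n hn]⟩

/-- For `p ∈ P_ρ(K)` and the Alfeld-split lifting operator `Q_k^ρ` with `b = k - ρ ≥ 1`:
for each `j` and each `0 ≤ n ≤ ρ`, the `n`-th derivative of `Q_k^ρ(p)|_{K_j}` at the split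
point `V_A` equals `((ρ-n)!/(k-n)!)` times the `n`-th derivative of `p` at `V_A`; in
particular `∇ⁿ Q_k^ρ(p)` is single-valued at `V_A` for `0 ≤ n ≤ ρ`. -/
theorem stmt9 (d ρ k bnum : ℕ) (hk : k = ρ + bnum) (hbnum : 1 ≤ bnum)
    (b : AffineBasis (Fin (d + 1)) ℝ (EuclideanSpace ℝ (Fin d)))
    (μ : Fin (d + 1) → ℝ) (hμ : ∀ i, 0 < μ i) (hsum : ∑ i, μ i = 1)
    (VA : EuclideanSpace ℝ (Fin d))
    (hVA : VA = Finset.univ.affineCombination ℝ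
      (b : Fin (d + 1) → EuclideanSpace ℝ (Fin d)) μ)
    (bj : Fin (d + 1) → AffineBasis (Fin (d + 1)) ℝ (EuclideanSpace ℝ (Fin d)))
    (hbj : ∀ j i, bj j i = if i = j then VA else b i)
    (p : EuclideanSpace ℝ (Fin d) → ℝ)
    (c : Fin (d + 1) → (Fin (d + 1) → ℕ) → ℝ)
    (hp : ∀ j x, p x = ∑ β ∈ Finset.Nat.antidiagonalTuple (d + 1) ρ,
      c j β * ∏ i, ((bj j).coord i x) ^ (β i) / ((β i).factorial : ℝ))
    (Qp : Fin (d + 1) → EuclideanSpace ℝ (Fin d) → ℝ)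
    (hQp : ∀ j x, Qp j x = ∑ β ∈ Finset.Nat.antidiagonalTuple (d + 1) ρ,
      c j β * (((bj j).coord j x) ^ (β j + bnum) / ((β j + bnum).factorial : ℝ) *
        ∏ i ∈ Finset.univ.erase j, ((bj j).coord i x) ^ (β i) / ((β i).factorial : ℝ))) :
    (∀ j, ∀ n, n ≤ ρ →
      iteratedFDeriv ℝ n (Qp j) VA =
        (((ρ - n).factorial : ℝ) / ((k - n).factorial : ℝ)) • iteratedFDeriv ℝ n p VA) ∧
    (∀ j j', ∀ n, n ≤ ρ →
      iteratedFDeriv ℝ n (Qp j) VA = iteratedFDeriv ℝ n (Qp j') VA) :=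
  stmt9_general d ρ k bnum hk b VA bj hbj p c hp Qp hQp
end

section
/- Let β ∈ Σ_0^{r°}(I_d, ρ), i.e., |β| = ρ and for every face F of K of dimension t with 0 ≤ t ≤ d−1, Σ_{i ∉ I_F} β_i ≥ r_{d−t} − b + 1. Then for each (d−1)-dimensional facet F of K, all derivatives of Q_k^ρ(⟦λ⟧^β) of order 0 ≤ n ≤ r_1 vanish on F. -/
/-!
On the sub-simplex of the Alfeld split in which the vertex `i₀` is replaced by the split point,
with barycentric coordinates `λ'`, one has `λ_{i₀} = μ_{i₀} λ'_{i₀}` and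
`λᵢ = λ'ᵢ + μᵢ λ'_{i₀}` for `i ≠ i₀`. Hence `⟦λ⟧^β` is divisible by `λ'_{i₀}^{β_{i₀}}`, and since
a homogeneous polynomial is determined by its values on the hyperplane `∑ wᵢ = 1`, its expansion
in the divided monomials `⟦λ'⟧^{β'}` only involves `β'` with `β'_{i₀} ≥ β_{i₀}`. After lifting,
each term carries the factor `λ'_{i₀}^{β'_{i₀} + b}`, where `β'_{i₀} + b ≥ β_{i₀} + b > r₁` by
the face condition for the facet `λ_{i₀} = 0`. As `λ'_{i₀}` vanishes on that facet, so do all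
derivatives of order at most `r₁`.
-/

open Finset MvPolynomial
open scoped ContDiff

namespace MvPolynomial
variable {σ R : Type*}

theorem IsHomogeneous.eval_smul_s12 [CommSemiring R] {p : MvPolynomial σ R} {n : ℕ}
    (hp : p.IsHomogeneous n) (t : R) (w : σ → R) :
    eval (t • w) p = t ^ n * eval w p := by
  rw [eval_eq, eval_eq, mul_sum]
  refine sum_congr rfl fun m hm => ?_
  have hdeg : ∑ i ∈ m.support, m i = n := by
    rw [← Finsupp.degree_apply, Finsupp.degree_eq_weight_one]
    exact hp (mem_support_iff.mp hm)
  simp only [Pi.smul_apply, smul_eq_mul, mul_pow, prod_mul_distrib, prod_pow_eq_pow_sum, hdeg]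
  ring

theorem sum_X_ne_zero [CommSemiring R] [Nontrivial R] [Fintype σ] [Nonempty σ] :
    (∑ i, X i : MvPolynomial σ R) ≠ 0 := by
  classical
  obtain ⟨i⟩ := ‹Nonempty σ›
  intro h
  simpa using congrArg (eval (Pi.single i 1)) h

theorem IsHomogeneous.eq_of_eval_eq_of_sum_eq_one [Field R] [Infinite R] [Fintype σ]
    [Nonempty σ] {p q : MvPolynomial σ R} {n : ℕ} (hp : p.IsHomogeneous n)
    (hq : q.IsHomogeneous n) (h : ∀ w : σ → R, ∑ i, w i = 1 → eval w p = eval w q) :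
    p = q := by
  suffices (p - q) * ∑ i, X i = 0 from
    sub_eq_zero.mp ((mul_eq_zero.mp this).resolve_right sum_X_ne_zero)
  refine MvPolynomial.funext fun w => ?_
  simp only [map_mul, map_sub, map_sum, eval_X, map_zero]
  rcases eq_or_ne (∑ i, w i) 0 with hs | hs
  · rw [hs, mul_zero]
  -- rescale `w` onto `∑ wᵢ = 1`; by homogeneity both values scale by `(∑ wᵢ)ⁿ`
  have hw : w = (∑ i, w i) • (∑ i, w i)⁻¹ • w := by rw [smul_smul, mul_inv_cancel₀ hs, one_smul]
  have hw1 : ∑ i, ((∑ i, w i)⁻¹ • w) i = 1 := by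
    simp only [Pi.smul_apply, smul_eq_mul, ← mul_sum, inv_mul_cancel₀ hs]
  rw [hw, hp.eval_smul_s12, hq.eval_smul_s12, h _ hw1, sub_self, zero_mul]

theorem coeff_X_pow_mul_eq_zero [CommSemiring R] [DecidableEq σ] {i : σ} {k : ℕ}
    (p : MvPolynomial σ R) {m : σ →₀ ℕ} (hm : m i < k) : coeff m (X i ^ k * p) = 0 := by
  rw [X_pow_eq_monomial, coeff_monomial_mul', if_neg]
  rwa [Finsupp.single_le_iff, not_le]

end MvPolynomial

namespace AffineBasis
variable {ι k V P : Type*} [Fintype ι] [AddCommGroup V] [AddTorsor V P]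

theorem coord_eq_sum_coord_mul_coord [CommRing k] [Module k V] (b b' : AffineBasis ι k P)
    (i : ι) (y : P) : b.coord i y = ∑ j, b'.coord j y * b.coord i (b' j) := by
  have hw := b'.sum_coord_apply_eq_one y
  conv_lhs => rw [← b'.affineCombination_coord_eq_self y]
  rw [univ.map_affineCombination _ _ hw, univ.affineCombination_eq_linear_combination _ _ hw]
  rfl

theorem coord_eq_of_replace [CommRing k] [Module k V] [DecidableEq ι] (b b' : AffineBasis ι k P)
    {i₀ : ι} {v : P} (hb' : ∀ i, b' i = if i = i₀ then v else b i) (i : ι) (y : P) :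
    b.coord i y = (if i = i₀ then 0 else b'.coord i y) + b.coord i v * b'.coord i₀ y := by
  rw [coord_eq_sum_coord_mul_coord b b', ← add_sum_erase _ _ (mem_univ i₀), hb', if_pos rfl,
    add_comm, mul_comm]
  congr 1
  have hterm : ∀ j ∈ univ.erase i₀, b'.coord j y * b.coord i (b' j) =
      if i = j then b'.coord j y else 0 := fun j hj => by
    rw [hb', if_neg (ne_of_mem_erase hj), coord_apply]
    split_ifs <;> simp
  rw [sum_congr rfl hterm, sum_ite_eq]
  simp [eq_comm]

theorem eq_of_eval_coord_eq [Field k] [Infinite k] [Module k V] (b : AffineBasis ι k P)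
    {p q : MvPolynomial ι k} {n : ℕ} (hp : p.IsHomogeneous n) (hq : q.IsHomogeneous n)
    (h : ∀ y, eval (fun i => b.coord i y) p = eval (fun i => b.coord i y) q) : p = q := by
  have := b.nonempty
  refine hp.eq_of_eval_eq_of_sum_eq_one hq fun w hw => ?_
  have hcoord : (fun i => b.coord i (univ.affineCombination k b w)) = w :=
    _root_.funext fun i => b.coord_apply_combination_of_mem (mem_univ i) hw
  simpa only [hcoord] using h (univ.affineCombination k b w)

end AffineBasis

section DividedMonomial
variable {ι K : Type*} [Fintype ι] [Field K]

/-- `⟦w⟧^β = ∏ᵢ wᵢ^βᵢ / βᵢ!` as a polynomial. -/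
noncomputable def dividedMonomial (β : ι → ℕ) : MvPolynomial ι K :=
  monomial (Finsupp.equivFunOnFinite.symm β) (∏ i, ((β i).factorial : K)⁻¹)

theorem eval_dividedMonomial (β : ι → ℕ) (w : ι → K) :
    eval w (dividedMonomial β) = ∏ i, w i ^ β i / ((β i).factorial : K) := by
  rw [dividedMonomial, eval_monomial, Finsupp.prod_fintype _ _ fun i => pow_zero _,
    ← prod_mul_distrib]
  simp only [Finsupp.coe_equivFunOnFinite_symm, div_eq_inv_mul]

theorem isHomogeneous_dividedMonomial (β : ι → ℕ) :
    (dividedMonomial β : MvPolynomial ι K).IsHomogeneous (∑ i, β i) := by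
  refine isHomogeneous_monomial _ ?_
  rw [Finsupp.degree_apply, sum_subset (subset_univ _) fun i _ h => Finsupp.notMem_support_iff.mp h]
  rfl

theorem coeff_dividedMonomial [DecidableEq ι] (β β' : ι → ℕ) :
    coeff (Finsupp.equivFunOnFinite.symm β') (dividedMonomial β : MvPolynomial ι K) =
      if β = β' then ∏ i, ((β i).factorial : K)⁻¹ else 0 := by
  simp only [dividedMonomial, coeff_monomial, EmbeddingLike.apply_eq_iff_eq]

end DividedMonomial

namespace AffineBasis
variable {ι K V P : Type*} [Fintype ι] [DecidableEq ι] [Field K] [CharZero K] [AddCommGroup V]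
  [Module K V] [AddTorsor V P]

theorem coeff_eq_zero_of_lt_of_replace (b b' : AffineBasis ι K P) {i₀ : ι} {v : P}
    (hb' : ∀ i, b' i = if i = i₀ then v else b i) {β : ι → ℕ} {S : Finset (ι → ℕ)}
    (hS : ∀ β' ∈ S, ∑ i, β' i = ∑ i, β i) (c : (ι → ℕ) → K)
    (hc : ∀ y, eval (fun i => b.coord i y) (dividedMonomial β) =
      ∑ β' ∈ S, c β' * eval (fun i => b'.coord i y) (dividedMonomial β'))
    {β' : ι → ℕ} (hβ' : β' ∈ S) (hlt : β' i₀ < β i₀) : c β' = 0 := by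
  set ℓ : ι → MvPolynomial ι K := fun i => (if i = i₀ then 0 else X i) + C (b.coord i v) * X i₀
  have hℓ : ∀ i y, eval (fun j => b'.coord j y) (ℓ i) = b.coord i y := fun i y => by
    rw [coord_eq_of_replace b b' hb' i y]
    split_ifs <;> simp [ℓ, *]
  have hℓhom : ∀ i, (ℓ i).IsHomogeneous 1 := fun i => by
    refine IsHomogeneous.add ?_ ((isHomogeneous_X _ _).C_mul _)
    split_ifs
    exacts [isHomogeneous_zero _ _ _, isHomogeneous_X _ _]
  set p : MvPolynomial ι K := C (∏ i, ((β i).factorial : K)⁻¹) * ∏ i, ℓ i ^ β i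
  set q : MvPolynomial ι K := ∑ β' ∈ S, C (c β') * dividedMonomial β'
  have hpq : p = q := by
    refine b'.eq_of_eval_coord_eq (n := ∑ i, β i) ?_ ?_ fun y => ?_
    · simpa using (IsHomogeneous.prod _ _ _ fun i _ => (hℓhom i).pow (β i)).C_mul _
    · exact IsHomogeneous.sum _ _ _ fun β' hβ' =>
        hS β' hβ' ▸ (isHomogeneous_dividedMonomial β').C_mul _
    · calc eval (fun i => b'.coord i y) p = eval (fun i => b.coord i y) (dividedMonomial β) := by
            simp only [p, map_mul, map_prod, map_pow, eval_C, hℓ, eval_dividedMonomial,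
              div_eq_mul_inv, prod_mul_distrib, mul_comm]
        _ = eval (fun i => b'.coord i y) q := by
            simp only [hc, q, map_sum, map_mul, eval_C]
  have hp : coeff (Finsupp.equivFunOnFinite.symm β') p = 0 := by
    obtain ⟨r, hr⟩ : X i₀ ^ β i₀ ∣ p := by
      refine Dvd.dvd.mul_left ((pow_dvd_pow_of_dvd ?_ _).trans
        (dvd_prod_of_mem (fun i => ℓ i ^ β i) (mem_univ i₀))) _
      simp [ℓ]
    rw [hr]
    exact coeff_X_pow_mul_eq_zero r hlt
  have hq : coeff (Finsupp.equivFunOnFinite.symm β') q = c β' * ∏ i, ((β' i).factorial : K)⁻¹ := by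
    simp only [q, coeff_sum, coeff_C_mul, coeff_dividedMonomial, mul_ite, mul_zero,
      sum_ite_eq', if_pos hβ']
  rw [hpq, hq] at hp
  exact (mul_eq_zero.mp hp).resolve_right
    (prod_ne_zero_iff.mpr fun i _ => by simp [Nat.factorial_ne_zero])

end AffineBasis

section PowSmul
variable {𝕜 E F : Type*} [NontriviallyNormedField 𝕜] [NormedAddCommGroup E] [NormedSpace 𝕜 E]
  [NormedAddCommGroup F] [NormedSpace 𝕜 F] {f : E → 𝕜}

theorem fderiv_pow_succ_smul {g : E → F} (hf : Differentiable 𝕜 f) (hg : Differentiable 𝕜 g)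
    (m : ℕ) :
    fderiv 𝕜 (fun y => f y ^ (m + 1) • g y) = fun y =>
      f y ^ m • (((m + 1 : ℕ) : 𝕜) • (fderiv 𝕜 f y).smulRight (g y) + f y • fderiv 𝕜 g y) := by
  funext y
  refine (((hf y).hasFDerivAt.pow (m + 1)).smul (hg y).hasFDerivAt).fderiv.trans ?_
  ext v
  simp only [add_apply, FunLike.coe_smul, Pi.smul_apply, ContinuousLinearMap.smulRight_apply,
    smul_add, smul_smul, nsmul_eq_mul, add_tsub_cancel_right]
  rw [add_comm]
  congr 2 <;> ring

theorem exists_iteratedFDeriv_pow_smul_eq (hf : ContDiff 𝕜 ∞ f) {g : E → F}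
    (hg : ContDiff 𝕜 ∞ g) {n m : ℕ} (hnm : n ≤ m) :
    ∃ G : E → ContinuousMultilinearMap 𝕜 (fun _ : Fin n => E) F, ContDiff 𝕜 ∞ G ∧
      ∀ y, iteratedFDeriv 𝕜 n (fun y => f y ^ m • g y) y = f y ^ (m - n) • G y := by
  induction n with
  | zero =>
    refine ⟨fun y => (continuousMultilinearCurryFin0 𝕜 E F).symm (g y),
      (continuousMultilinearCurryFin0 𝕜 E F).symm.contDiff.comp hg, fun y => ?_⟩
    rw [iteratedFDeriv_zero_eq_comp, Function.comp_apply, LinearIsometryEquiv.map_smul,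
      Nat.sub_zero]
  | succ n ih =>
    obtain ⟨G, hG, hfG⟩ := ih (by omega)
    obtain ⟨k, hk⟩ : ∃ k, m - n = k + 1 := ⟨m - n - 1, by omega⟩
    set H : E → E →L[𝕜] ContinuousMultilinearMap 𝕜 (fun _ : Fin n => E) F := fun y =>
      ((k + 1 : ℕ) : 𝕜) • (fderiv 𝕜 f y).smulRight (G y) + f y • fderiv 𝕜 G y
    have hH : ContDiff 𝕜 ∞ H :=
      (((ContinuousLinearMap.smulRightL 𝕜 E _).isBoundedBilinearMap.contDiff.comp
        ((hf.fderiv_right le_rfl).prodMk hG)).const_smul _).add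
        (hf.smul (hG.fderiv_right le_rfl))
    let e := (continuousMultilinearCurryLeftEquiv 𝕜 (fun _ : Fin (n + 1) => E) F).symm
    refine ⟨fun y => e (H y), by exact e.contDiff.comp hH, fun y => ?_⟩
    have hderiv : iteratedFDeriv 𝕜 n (fun y => f y ^ m • g y) = fun y => f y ^ (k + 1) • G y :=
      funext fun y => by rw [hfG, hk]
    rw [iteratedFDeriv_succ_eq_comp_left, Function.comp_apply, hderiv,
      fderiv_pow_succ_smul (hf.differentiable (by simp)) (hG.differentiable (by simp)),
      LinearIsometryEquiv.map_smul, show m - (n + 1) = k by omega]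

theorem iteratedFDeriv_pow_smul_eq_zero (hf : ContDiff 𝕜 ∞ f) {g : E → F}
    (hg : ContDiff 𝕜 ∞ g) {n m : ℕ} (hnm : n < m) {x : E} (hx : f x = 0) :
    iteratedFDeriv 𝕜 n (fun y => f y ^ m • g y) x = 0 := by
  obtain ⟨G, -, hfG⟩ := exists_iteratedFDeriv_pow_smul_eq hf hg hnm.le
  rw [hfG, hx, zero_pow (by omega), zero_smul]

end PowSmul


namespace AffineBasis
variable {ι 𝕜 E : Type*} [NontriviallyNormedField 𝕜] [CompleteSpace 𝕜] [NormedAddCommGroup E]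
  [NormedSpace 𝕜 E] [FiniteDimensional 𝕜 E]

theorem contDiff_coord_s12 (b : AffineBasis ι 𝕜 E) (i : ι) : ContDiff 𝕜 ∞ (b.coord i) :=
  (⟨b.coord i, continuous_barycentric_coord b i⟩ : E →ᴬ[𝕜] 𝕜).contDiff

variable [Fintype ι] [DecidableEq ι]

/-- The lifting `Q_k^ρ` of `∑_{β ∈ S} c β ⟦λ⟧^β`, `λ` the barycentric coordinates of `b`:
the exponent of `λⱼ` is raised by `a`. -/
noncomputable def lift (b : AffineBasis ι 𝕜 E) (j : ι) (a : ℕ) (S : Finset (ι → ℕ))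
    (c : (ι → ℕ) → 𝕜) (y : E) : 𝕜 :=
  ∑ β ∈ S, c β * (b.coord j y ^ (β j + a) / ((β j + a).factorial : 𝕜) *
    ∏ i ∈ univ.erase j, b.coord i y ^ β i / ((β i).factorial : 𝕜))

theorem iteratedFDeriv_lift_eq_zero (b : AffineBasis ι 𝕜 E) (j : ι) (a : ℕ)
    (S : Finset (ι → ℕ)) (c : (ι → ℕ) → 𝕜) {n : ℕ} (hc : ∀ β ∈ S, c β ≠ 0 → n < β j + a)
    {x : E} (hx : b.coord j x = 0) : iteratedFDeriv 𝕜 n (b.lift j a S c) x = 0 := by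
  set g : (ι → ℕ) → E → 𝕜 := fun β y => c β / ((β j + a).factorial : 𝕜) *
    ∏ i ∈ univ.erase j, b.coord i y ^ β i / ((β i).factorial : 𝕜)
  have hg : ∀ β, ContDiff 𝕜 ∞ (g β) := fun β =>
    contDiff_const.mul (contDiff_prod fun i _ => ((b.contDiff_coord_s12 i).pow _).div_const _)
  have hlift : b.lift j a S c = fun y => ∑ β ∈ S, b.coord j y ^ (β j + a) • g β y := by
    funext y
    refine sum_congr rfl fun β _ => ?_
    simp only [g, smul_eq_mul]
    ring
  rw [hlift, iteratedFDeriv_fun_sum_apply (f := fun β y => b.coord j y ^ (β j + a) • g β y)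
    fun β _ => (((b.contDiff_coord_s12 j).pow _).smul (hg β)).contDiffAt.of_le
      (by exact_mod_cast le_top)]
  refine sum_eq_zero fun β hβ => ?_
  by_cases h0 : c β = 0
  · simp [g, h0]
  · exact iteratedFDeriv_pow_smul_eq_zero (b.contDiff_coord_s12 j) (hg β) (hc β hβ h0) hx

end AffineBasis

theorem stmt12_general (d : ℕ) (hd : 2 ≤ d) (r : ℕ → ℕ) (ρ bnum : ℕ)
    (b : AffineBasis (Fin (d + 1)) ℝ (EuclideanSpace ℝ (Fin d)))
    (μ : Fin (d + 1) → ℝ) (hμ : ∀ i, 0 < μ i) (hsum : ∑ i, μ i = 1)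
    (VA : EuclideanSpace ℝ (Fin d))
    (hVA : VA = Finset.univ.affineCombination ℝ
      (b : Fin (d + 1) → EuclideanSpace ℝ (Fin d)) μ)
    (bj : Fin (d + 1) → AffineBasis (Fin (d + 1)) ℝ (EuclideanSpace ℝ (Fin d)))
    (hbj : ∀ j i, bj j i = if i = j then VA else b i)
    (β : Fin (d + 1) → ℕ) (hβsum : ∑ i, β i = ρ)
    (hβface : ∀ IF : Finset (Fin (d + 1)), IF.Nonempty → IF ≠ Finset.univ →
      (r (d - (IF.card - 1)) : ℤ) - (bnum : ℤ) + 1 ≤ ∑ i ∈ IFᶜ, (β i : ℤ))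
    (c : Fin (d + 1) → (Fin (d + 1) → ℕ) → ℝ)
    (hc : ∀ j x, (∏ i, (b.coord i x) ^ (β i) / ((β i).factorial : ℝ)) =
      ∑ β' ∈ Finset.Nat.antidiagonalTuple (d + 1) ρ,
        c j β' * ∏ i, ((bj j).coord i x) ^ (β' i) / ((β' i).factorial : ℝ))
    (Qp : Fin (d + 1) → EuclideanSpace ℝ (Fin d) → ℝ)
    (hQp : ∀ j x, Qp j x = ∑ β' ∈ Finset.Nat.antidiagonalTuple (d + 1) ρ,
      c j β' * (((bj j).coord j x) ^ (β' j + bnum) / ((β' j + bnum).factorial : ℝ) *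
        ∏ i ∈ Finset.univ.erase j, ((bj j).coord i x) ^ (β' i) / ((β' i).factorial : ℝ))) :
    ∀ i₀ : Fin (d + 1), ∀ n, n ≤ r 1 →
      ∀ x : EuclideanSpace ℝ (Fin d), b.coord i₀ x = 0 →
        iteratedFDeriv ℝ n (Qp i₀) x = 0 := by
  intro i₀ n hn x hx
  have hfacet_coord : (bj i₀).coord i₀ x = 0 := by
    have h := b.coord_eq_of_replace (bj i₀) (hbj i₀) i₀ x
    rw [if_pos rfl, zero_add, hx, hVA, b.coord_apply_combination_of_mem (mem_univ i₀) hsum] at h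
    exact (mul_eq_zero.mp h.symm).resolve_left (hμ i₀).ne'
  have hfacet : r 1 < β i₀ + bnum := by
    have hcard : (univ.erase i₀).card = d := by simp [card_erase_of_mem]
    have h := hβface (univ.erase i₀) (card_pos.mp (by omega)) (erase_ssubset (mem_univ i₀)).ne
    rw [hcard, show d - (d - 1) = 1 by omega, compl_erase, compl_univ, insert_empty,
      sum_singleton] at h
    omega
  have hexpansion : ∀ β' ∈ Finset.Nat.antidiagonalTuple (d + 1) ρ, β' i₀ < β i₀ → c i₀ β' = 0 :=
    fun β' hβ' => b.coeff_eq_zero_of_lt_of_replace (bj i₀) (hbj i₀)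
      (fun β' h => by rw [Finset.Nat.mem_antidiagonalTuple.mp h, hβsum]) (c i₀)
      (by simpa only [eval_dividedMonomial] using hc i₀) hβ'
  rw [show Qp i₀ = (bj i₀).lift i₀ bnum _ (c i₀) from funext (hQp i₀)]
  refine (bj i₀).iteratedFDeriv_lift_eq_zero i₀ bnum _ _ (fun β' hβ' hne => ?_) hfacet_coord
  have hge := not_lt.mp (hne ∘ hexpansion β' hβ')
  omega

/-- Let `β ∈ Σ₀^{r°}(I_d, ρ)`, i.e. `|β| = ρ` and for every face `F` of `K`
`∑_{i ∉ I_F} β_i ≥ r_{d-t} - b + 1` (`t = dim F`). Then for each facet `F` of `K`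
(opposite a vertex `i₀`), all derivatives of `Q_k^ρ(⟦λ⟧^β)` of order `0 ≤ n ≤ r₁`
vanish on `F`. -/
theorem stmt12 (d : ℕ) (hd : 2 ≤ d) (r : ℕ → ℕ) (ρ k bnum : ℕ)
    (hr1 : 1 ≤ r 1)
    (hceil1 : 1 ≤ ⌈(3 * (r 1 : ℚ) - 1) / 2⌉)
    (hceil2 : ⌈(3 * (r 1 : ℚ) - 1) / 2⌉ ≤ (r 2 : ℤ))
    (hr2 : (r 2 : ℤ) ≤ 2 * (r 1 : ℤ) - 1)
    (hchain : ∀ s, 2 ≤ s → s + 1 ≤ d →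
      2 ^ (d - s) * r s ≤ 2 ^ (d - s - 1) * r (s + 1))
    (hkr : 2 * r d + 1 ≤ k)
    (hρ : k = ρ + bnum) (hbnum : 1 ≤ bnum)
    (hb1 : 2 * (r 1 : ℤ) - (r 2 : ℤ) ≤ (bnum : ℤ))
    (hb2 : (bnum : ℤ) ≤ (r 2 : ℤ) - (r 1 : ℤ) + 1)
    (b : AffineBasis (Fin (d + 1)) ℝ (EuclideanSpace ℝ (Fin d)))
    (μ : Fin (d + 1) → ℝ) (hμ : ∀ i, 0 < μ i) (hsum : ∑ i, μ i = 1)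
    (VA : EuclideanSpace ℝ (Fin d))
    (hVA : VA = Finset.univ.affineCombination ℝ
      (b : Fin (d + 1) → EuclideanSpace ℝ (Fin d)) μ)
    (bj : Fin (d + 1) → AffineBasis (Fin (d + 1)) ℝ (EuclideanSpace ℝ (Fin d)))
    (hbj : ∀ j i, bj j i = if i = j then VA else b i)
    (β : Fin (d + 1) → ℕ) (hβsum : ∑ i, β i = ρ)
    (hβface : ∀ IF : Finset (Fin (d + 1)), IF.Nonempty → IF ≠ Finset.univ →
      (r (d - (IF.card - 1)) : ℤ) - (bnum : ℤ) + 1 ≤ ∑ i ∈ IFᶜ, (β i : ℤ))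
    (c : Fin (d + 1) → (Fin (d + 1) → ℕ) → ℝ)
    (hc : ∀ j x, (∏ i, (b.coord i x) ^ (β i) / ((β i).factorial : ℝ)) =
      ∑ β' ∈ Finset.Nat.antidiagonalTuple (d + 1) ρ,
        c j β' * ∏ i, ((bj j).coord i x) ^ (β' i) / ((β' i).factorial : ℝ))
    (Qp : Fin (d + 1) → EuclideanSpace ℝ (Fin d) → ℝ)
    (hQp : ∀ j x, Qp j x = ∑ β' ∈ Finset.Nat.antidiagonalTuple (d + 1) ρ,
      c j β' * (((bj j).coord j x) ^ (β' j + bnum) / ((β' j + bnum).factorial : ℝ) *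
        ∏ i ∈ Finset.univ.erase j, ((bj j).coord i x) ^ (β' i) / ((β' i).factorial : ℝ))) :
    ∀ i₀ : Fin (d + 1), ∀ n, n ≤ r 1 →
      ∀ x : EuclideanSpace ℝ (Fin d), b.coord i₀ x = 0 →
        iteratedFDeriv ℝ n (Qp i₀) x = 0 :=
  stmt12_general d hd r ρ bnum b μ hμ hsum VA hVA bj hbj β hβsum hβface c hc Qp hQp
end

section
/- Define B_{0,n} := 1 and, for 1 ≤ t ≤ d−1 and 0 ≤ n ≤ r_{d−t}, define B_{t,n} := #Σ_0^{q_{t,n}}(I_t, k−n), the number of multi-indices σ ∈ ℕ^{t+1} with |σ| = k−n such that for every proper face E of the t-simplex of dimension t', Σ_{i∉I_E} σ_i ≥ r_{d−t'} − n + 1. Then B_{t,n} = C(k−n+t, t) − Σ_{t'=0}^{t−1} C(t+1, t'+1) Σ_{n'=n}^{r_{d−t'}} C(n'−n+t−t'−1, t−t'−1) B_{t',n'}. -/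
/-!
Call a face `E` of a multi-index `σ` violated when `k ≤ ∑_{i ∈ E} σ i + θ #E`. With
`θ (t' + 1) = r_{d-t'}` and `|σ| = k - n` this is the failure of the paper's inequality on `E`,
so `B t n` counts the multi-indices of total `k - n` on `t + 1` coordinates with no violated
proper face. Every other multi-index has a minimal violated proper face, and it is unique: two
non-nested minimal violated faces would force their intersection to be violated, because
`θ a + θ b ≤ θ c` for `c < a, b` (this is where the doubling `2 r_s ≤ r_{s+1}` enters) and
`θ a + θ b < k`. So the bad multi-indices split into strata indexed by proper faces. On the
stratum of `E`, the restriction of `σ` to `E` is an admissible multi-index on `E` (minimality of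
`E` says exactly that) of some total `k - n'` with `n ≤ n' ≤ θ #E`, while the restriction to the
complement is an arbitrary multi-index of total `n' - n`. Counting the strata by the size of `E`
gives the recursion.
-/

open Finset

lemma Finset.card_piAntidiag_univ {ι : Type*} [Fintype ι] [DecidableEq ι] (m : ℕ) :
    #(piAntidiag (univ : Finset ι) m) = (Fintype.card ι).multichoose m := by
  rw [← map_sym_eq_piAntidiag, card_map, sym_univ, card_univ, Sym.card_sym_eq_multichoose]

lemma Nat.multichoose_succ_eq_choose (c m : ℕ) : (c + 1).multichoose m = (m + c).choose c := by
  rw [Nat.multichoose_eq, show c + 1 + m - 1 = m + c by omega, Nat.choose_symm_add]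

lemma Finset.sum_Icc_tsub {M : Type*} [AddCommMonoid M] (f : ℕ → M) {a b k : ℕ} (ha : a ≤ k)
    (hb : b ≤ k) : ∑ s ∈ Icc (k - b) (k - a), f s = ∑ n ∈ Icc a b, f (k - n) :=
  sum_nbij' (k - ·) (k - ·) (fun _ h => by simp only [mem_Icc] at h ⊢; omega)
    (fun _ h => by simp only [mem_Icc] at h ⊢; omega)
    (fun _ h => by simp only [mem_Icc] at h; omega) (fun _ h => by simp only [mem_Icc] at h; omega)
    (fun _ h => by simp only [mem_Icc] at h; congr; omega)

namespace MultiIndex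

section Definitions

variable (θ : ℕ → ℕ) (k : ℕ)

def Violates {ι : Type*} (σ : ι → ℕ) (E : Finset ι) : Prop :=
  k ≤ ∑ i ∈ E, σ i + θ #E

instance {ι : Type*} (σ : ι → ℕ) (E : Finset ι) : Decidable (Violates θ k σ E) :=
  inferInstanceAs (Decidable (_ ≤ _))

def admissible (ι : Type*) [Fintype ι] [DecidableEq ι] (m : ℕ) : Finset (ι → ℕ) :=
  (piAntidiag univ m).filter fun σ =>
    ∀ E : Finset ι, E.Nonempty → E ≠ univ → ¬ Violates θ k σ E

open scoped Classical in
noncomputable def stratum {ι : Type*} [Fintype ι] [DecidableEq ι] (m : ℕ) (E : Finset ι) :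
    Finset (ι → ℕ) :=
  (piAntidiag univ m).filter fun σ => Minimal (fun F => F.Nonempty ∧ Violates θ k σ F) E

def properFaces (ι : Type*) [Fintype ι] [DecidableEq ι] : Finset (Finset ι) :=
  univ.filter fun E => E.Nonempty ∧ E ≠ univ

lemma violates_comp_embedding {ι κ : Type*} (f : ι ↪ κ) (σ : κ → ℕ) (F : Finset ι) :
    Violates θ k (σ ∘ f) F ↔ Violates θ k σ (F.map f) := by
  simp only [Violates, sum_map, card_map, Function.comp_apply]

end Definitions

variable {ι κ : Type*} [DecidableEq ι] {θ : ℕ → ℕ} {k : ℕ}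

lemma restrict_mem_admissible_iff {E : Finset ι} {σ : ι → ℕ} {s : ℕ} :
    (fun x : E => σ x) ∈ admissible θ k E s ↔
      ∑ i ∈ E, σ i = s ∧ ∀ F ⊂ E, F.Nonempty → ¬ Violates θ k σ F := by
  set f := Function.Embedding.subtype (· ∈ E)
  have hfaces : ∀ F : Finset E, F.map f ⊂ E ↔ F ≠ univ := fun F => by
    have hE : (univ : Finset E).map f = E := by rw [univ_eq_attach, attach_map_val]
    rw [← ssubset_univ_iff, ← map_ssubset_map (f := f), hE]
  simp only [admissible, mem_filter, mem_piAntidiag, mem_univ, implies_true, and_true,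
    sum_coe_sort E σ]
  simp only [show (fun x : E => σ x) = σ ∘ f from rfl, violates_comp_embedding]
  refine and_congr_right fun _ => ⟨fun h F hFE hF => ?_, fun h F hF hFu => ?_⟩
  · have hF' : (F.subtype (· ∈ E)).map f = F := subtype_map_of_mem fun x hx => hFE.subset hx
    rw [← hF'] at hFE hF ⊢
    exact h _ (map_nonempty.1 hF) ((hfaces _).1 hFE)
  · exact h _ ((hfaces F).2 hFu) hF.map

variable [Fintype ι] [Fintype κ] [DecidableEq κ]

lemma comp_mem_admissible (e : ι ≃ κ) {m : ℕ} {σ : κ → ℕ} (hσ : σ ∈ admissible θ k κ m) :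
    σ ∘ e ∈ admissible θ k ι m := by
  simp only [admissible, mem_filter, mem_piAntidiag, mem_univ, implies_true, and_true] at hσ ⊢
  refine ⟨by rw [← hσ.1]; exact e.sum_comp σ, fun E hne hE => ?_⟩
  rw [show σ ∘ e = σ ∘ e.toEmbedding from rfl, violates_comp_embedding]
  refine hσ.2 _ hne.map fun h => hE ?_
  rwa [← map_univ_equiv e, map_inj] at h

variable (θ k) in
lemma card_admissible_congr (e : ι ≃ κ) (m : ℕ) :
    #(admissible θ k ι m) = #(admissible θ k κ m) :=
  card_nbij' (· ∘ e.symm) (· ∘ e) (fun _ hσ => comp_mem_admissible e.symm hσ)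
    (fun _ hσ => comp_mem_admissible e hσ) (fun σ _ => by ext; simp) (fun σ _ => by ext; simp)

lemma admissible_of_subsingleton [Subsingleton ι] (m : ℕ) :
    admissible θ k ι m = piAntidiag univ m :=
  filter_true_of_mem fun _ _ _ hE hEu => absurd hE.eq_univ hEu

lemma admissible_eq_filter {n : ℕ} (hn : n ≤ k) :
    admissible θ k ι (k - n) = (piAntidiag univ (k - n)).filter fun σ =>
      ∀ E : Finset ι, E.Nonempty → E ≠ univ → (θ #E : ℤ) - n + 1 ≤ ∑ i ∈ Eᶜ, (σ i : ℤ) := by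
  refine filter_congr fun σ hσ => forall_congr' fun E => imp_congr_right fun _ =>
    imp_congr_right fun _ => ?_
  have hsplit := sum_add_sum_compl E σ
  rw [(mem_piAntidiag.1 hσ).1] at hsplit
  rw [Violates, ← Nat.cast_sum]
  omega

lemma mem_stratum_iff {m : ℕ} {E : Finset ι} (hE : E.Nonempty) {σ : ι → ℕ} :
    σ ∈ stratum θ k m E ↔ ∑ i ∈ E, σ i ∈ Icc (k - θ #E) m ∧
      (fun x : E => σ x) ∈ admissible θ k E (∑ i ∈ E, σ i) ∧
      (fun x : {i // i ∉ E} => σ x) ∈ piAntidiag univ (m - ∑ i ∈ E, σ i) := by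
  have hsplit : ∑ i ∈ E, σ i + ∑ i ∈ Eᶜ, σ i = univ.sum σ := sum_add_sum_compl E σ
  have hcompl : ∑ x : {i // i ∉ E}, σ x = ∑ i ∈ Eᶜ, σ i := (sum_subtype _ (by simp) σ).symm
  simp only [stratum, mem_filter, mem_piAntidiag, mem_univ, implies_true, and_true,
    minimal_iff_forall_lt, restrict_mem_admissible_iff, mem_Icc, hcompl, Violates, true_and,
    hE, not_and]
  constructor
  · rintro ⟨hm, hv, hmin⟩
    exact ⟨⟨by omega, by omega⟩, hmin, by omega⟩
  · rintro ⟨⟨h₁, h₂⟩, hmin, hc⟩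
    exact ⟨by omega, by omega, hmin⟩

variable (θ k) in
lemma card_stratum_eq_sum (m : ℕ) {E : Finset ι} (hE : E.Nonempty) :
    #(stratum θ k m E) = ∑ s ∈ Icc (k - θ #E) m,
      #(admissible θ k E s) * #(piAntidiag (univ : Finset {i // i ∉ E}) (m - s)) := by
  simp only [← card_product, ← card_sigma]
  let e := Equiv.piEquivPiSubtypeProd (· ∈ E) (fun _ => ℕ)
  have hsum : ∀ τ υ, ∑ i ∈ E, e.symm (τ, υ) i = ∑ x, τ x := fun τ υ => by
    rw [← sum_coe_sort E]
    exact sum_congr rfl fun x _ => congrFun (congrArg Prod.fst (e.apply_symm_apply (τ, υ))) x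
  refine card_bij' (fun σ _ => ⟨∑ i ∈ E, σ i, e σ⟩) (fun p _ => e.symm p.2) ?_ ?_ ?_ ?_
  · intro σ hσ
    obtain ⟨hs, hadm, hcompl⟩ := (mem_stratum_iff hE).1 hσ
    exact mem_sigma.2 ⟨hs, mem_product.2 ⟨hadm, hcompl⟩⟩
  · rintro ⟨s, τ, υ⟩ hp
    obtain ⟨hs, hτ, hυ⟩ := by simpa only [mem_sigma, mem_product] using hp
    have hτs : ∑ i ∈ E, e.symm (τ, υ) i = s := by
      rw [hsum]; exact (mem_piAntidiag.1 (mem_filter.1 hτ).1).1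
    have hres := e.apply_symm_apply (τ, υ)
    refine (mem_stratum_iff hE).2 ?_
    rw [hτs, show (fun x : E => e.symm (τ, υ) x) = τ from congrArg Prod.fst hres,
      show (fun x : {i // i ∉ E} => e.symm (τ, υ) x) = υ from congrArg Prod.snd hres]
    exact ⟨hs, hτ, hυ⟩
  · intro σ _
    exact e.symm_apply_apply σ
  · rintro ⟨s, τ, υ⟩ hp
    obtain ⟨-, hτ, -⟩ := by simpa only [mem_sigma, mem_product] using hp
    refine Sigma.ext ?_ (heq_of_eq (e.apply_symm_apply (τ, υ)))
    rw [hsum]; exact (mem_piAntidiag.1 (mem_filter.1 hτ).1).1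

variable (θ k) in
lemma card_stratum (m : ℕ) {E : Finset ι} (hE : E.Nonempty) :
    #(stratum θ k m E) = ∑ s ∈ Icc (k - θ #E) m,
      #(admissible θ k (Fin #E) s) * (Fintype.card ι - #E).multichoose (m - s) := by
  rw [card_stratum_eq_sum θ k m hE]
  refine sum_congr rfl fun s _ => ?_
  rw [card_admissible_congr θ k E.equivFin, card_piAntidiag_univ, Fintype.card_subtype_compl,
    Fintype.card_coe]

lemma eq_of_minimal_violates {σ : ι → ℕ} (hσ : ∑ i, σ i ≤ k)
    (hθ : ∀ a b c, 0 < c → c < a → c < b → a < Fintype.card ι → b < Fintype.card ι →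
      θ a + θ b ≤ θ c)
    (hθk : ∀ a b, 0 < a → 0 < b → a < Fintype.card ι → b < Fintype.card ι → θ a + θ b < k)
    {E₁ E₂ : Finset ι} (hE₁ : E₁ ≠ univ) (hE₂ : E₂ ≠ univ)
    (h₁ : Minimal (fun F => F.Nonempty ∧ Violates θ k σ F) E₁)
    (h₂ : Minimal (fun F => F.Nonempty ∧ Violates θ k σ F) E₂) : E₁ = E₂ := by
  by_cases h12 : E₁ ⊆ E₂
  · exact le_antisymm h12 (h₂.2 h₁.1 h12)
  by_cases h21 : E₂ ⊆ E₁
  · exact le_antisymm (h₁.2 h₂.1 h21) h21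
  exfalso
  have hM₁ : E₁ ∩ E₂ ⊂ E₁ :=
    ssubset_of_subset_of_ne inter_subset_left fun h => h12 (h ▸ inter_subset_right)
  have hM₂ : E₁ ∩ E₂ ⊂ E₂ :=
    ssubset_of_subset_of_ne inter_subset_right fun h => h21 (h ▸ inter_subset_left)
  have hsum : ∑ i ∈ E₁, σ i + ∑ i ∈ E₂, σ i ≤ ∑ i ∈ E₁ ∩ E₂, σ i + k := by
    rw [← sum_union_inter]
    have := sum_le_sum_of_subset (f := σ) (subset_univ (E₁ ∪ E₂))
    omega
  have hcard₁ := (card_lt_iff_ne_univ _).2 hE₁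
  have hcard₂ := (card_lt_iff_ne_univ _).2 hE₂
  have hv₁ := h₁.1.2
  have hv₂ := h₂.1.2
  unfold Violates at hv₁ hv₂
  rcases (E₁ ∩ E₂).eq_empty_or_nonempty with hM | hM
  · have := hθk _ _ h₁.1.1.card_pos h₂.1.1.card_pos hcard₁ hcard₂
    rw [hM, sum_empty] at hsum
    omega
  · have := hθ _ _ _ hM.card_pos (card_lt_card hM₁) (card_lt_card hM₂) hcard₁ hcard₂
    exact h₁.not_prop_of_lt hM₁ ⟨hM, by unfold Violates; omega⟩

lemma card_admissible_add_sum_card_stratum {m : ℕ} (hm : m ≤ k)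
    (hθ : ∀ a b c, 0 < c → c < a → c < b → a < Fintype.card ι → b < Fintype.card ι →
      θ a + θ b ≤ θ c)
    (hθk : ∀ a b, 0 < a → 0 < b → a < Fintype.card ι → b < Fintype.card ι → θ a + θ b < k) :
    #(admissible θ k ι m) + ∑ E ∈ properFaces ι, #(stratum θ k m E) =
      #(piAntidiag (univ : Finset ι) m) := by
  have hbad : (piAntidiag univ m).filter
      (fun σ => ¬ ∀ E : Finset ι, E.Nonempty → E ≠ univ → ¬ Violates θ k σ E) =
      (properFaces ι).biUnion (stratum θ k m) := by
    ext σ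
    simp only [mem_filter, mem_biUnion, properFaces, mem_univ, true_and, not_forall, not_not,
      stratum]
    constructor
    · rintro ⟨hσ, E, hne, hE, hv⟩
      obtain ⟨F, hFE, hF⟩ := exists_minimal_le_of_wellFoundedLT
        (fun F => F.Nonempty ∧ Violates θ k σ F) E ⟨hne, hv⟩
      exact ⟨F, ⟨hF.1.1, fun h => hE (univ_subset_iff.1 (h ▸ hFE))⟩, hσ, hF⟩
    · rintro ⟨E, ⟨hne, hE⟩, hσ, hmin⟩
      exact ⟨hσ, E, hne, hE, hmin.1.2⟩
  have hdisj : (properFaces ι : Set (Finset ι)).PairwiseDisjoint (stratum θ k m) := by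
    intro E₁ h₁ E₂ h₂ hne
    simp only [properFaces, coe_filter, mem_univ, true_and, Set.mem_ofPred_eq] at h₁ h₂
    refine disjoint_left.2 fun σ hσ₁ hσ₂ => hne ?_
    simp only [stratum, mem_filter, mem_piAntidiag] at hσ₁ hσ₂
    exact eq_of_minimal_violates (hσ₁.1.1.trans_le hm) hθ hθk h₁.2 h₂.2 hσ₁.2 hσ₂.2
  rw [← card_biUnion hdisj, ← hbad, admissible, card_filter_add_card_filter_not]

lemma sum_properFaces {M : Type*} [AddCommMonoid M] {p : ℕ} (hp : Fintype.card ι = p + 1)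
    (g : ℕ → M) :
    ∑ E ∈ properFaces ι, g #E = ∑ j ∈ range p, (p + 1).choose (j + 1) • g (j + 1) := by
  have hproper : ∀ E : Finset ι, E.Nonempty ∧ E ≠ univ ↔ 0 < #E ∧ #E < p + 1 := fun E => by
    rw [card_pos, ← hp, card_lt_iff_ne_univ]
  simp only [properFaces, sum_filter, hproper, ← powerset_univ]
  rw [sum_powerset_apply_card (fun j => if 0 < j ∧ j < p + 1 then g j else 0), card_univ, hp,
    sum_range_succ, sum_range_succ']
  simp only [lt_irrefl, and_false, if_false, smul_zero, add_zero, false_and]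
  refine sum_congr rfl fun j hj => ?_
  rw [if_pos ⟨j.succ_pos, by simp at hj; omega⟩]

variable (θ k) in
theorem card_admissible_add_sum_eq_multichoose {p m : ℕ} (hm : m ≤ k)
    (hθ : ∀ a b c, 0 < c → c < a → c < b → a < p + 1 → b < p + 1 → θ a + θ b ≤ θ c)
    (hθk : ∀ a b, 0 < a → 0 < b → a < p + 1 → b < p + 1 → θ a + θ b < k) :
    #(admissible θ k (Fin (p + 1)) m) + ∑ j ∈ range p, (p + 1).choose (j + 1) *
      ∑ s ∈ Icc (k - θ (j + 1)) m,
        #(admissible θ k (Fin (j + 1)) s) * (p - j).multichoose (m - s) =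
      (p + 1).multichoose m := by
  have hcard : Fintype.card (Fin (p + 1)) = p + 1 := Fintype.card_fin _
  have h := card_admissible_add_sum_card_stratum (ι := Fin (p + 1)) hm (by rwa [hcard])
    (by rwa [hcard])
  rw [card_piAntidiag_univ, sum_congr rfl fun E hE => card_stratum θ k m (mem_filter.1 hE).2.1,
    sum_properFaces hcard (fun j => ∑ s ∈ Icc (k - θ j) m,
      #(admissible θ k (Fin j) s) * (Fintype.card (Fin (p + 1)) - j).multichoose (m - s))] at h
  simpa only [hcard, smul_eq_mul, Nat.add_sub_add_right] using h

variable (θ k) in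
theorem card_admissible_eq_choose_sub_sum {p n : ℕ} (hn : n ≤ k)
    (hθ : ∀ a b c, 0 < c → c < a → c < b → a < p + 1 → b < p + 1 → θ a + θ b ≤ θ c)
    (hθk : ∀ a b, 0 < a → 0 < b → a < p + 1 → b < p + 1 → θ a + θ b < k)
    (hθle : ∀ j < p, θ (j + 1) ≤ k) :
    (#(admissible θ k (Fin (p + 1)) (k - n)) : ℤ) = ((k - n + p).choose p : ℤ) -
      ∑ j ∈ range p, ((p + 1).choose (j + 1) : ℤ) *
        ∑ n' ∈ Icc n (θ (j + 1)), ((n' - n + p - j - 1).choose (p - j - 1) : ℤ) *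
          #(admissible θ k (Fin (j + 1)) (k - n')) := by
  have h := card_admissible_add_sum_eq_multichoose θ k (m := k - n) (Nat.sub_le k n) hθ hθk
  have hinner : ∀ j ∈ range p, ∑ s ∈ Icc (k - θ (j + 1)) (k - n),
      #(admissible θ k (Fin (j + 1)) s) * (p - j).multichoose (k - n - s) =
      ∑ n' ∈ Icc n (θ (j + 1)),
        (n' - n + p - j - 1).choose (p - j - 1) * #(admissible θ k (Fin (j + 1)) (k - n')) := by
    intro j hj
    have hjp := mem_range.1 hj
    have hθj := hθle j hjp
    rw [sum_Icc_tsub _ hn hθj]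
    refine sum_congr rfl fun n' hn' => ?_
    rw [mem_Icc] at hn'
    rw [show p - j = p - j - 1 + 1 by omega, Nat.multichoose_succ_eq_choose, mul_comm]
    congr 2; omega
  rw [sum_congr rfl fun j hj => by rw [hinner j hj], Nat.multichoose_succ_eq_choose] at h
  rw [eq_sub_iff_add_eq]
  exact_mod_cast h

end MultiIndex
section Chain

variable {r : ℕ → ℕ} {d : ℕ}

lemma two_mul_le_succ_of_chain
    (hchain : ∀ s, 2 ≤ s → s + 1 ≤ d → 2 ^ (d - s) * r s ≤ 2 ^ (d - s - 1) * r (s + 1)) :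
    ∀ s, 2 ≤ s → s + 1 ≤ d → 2 * r s ≤ r (s + 1) := by
  intro s hs hsd
  obtain ⟨e, he⟩ : ∃ e, d - s = e + 1 := ⟨d - s - 1, by omega⟩
  have h := hchain s hs hsd
  rw [he, Nat.add_sub_cancel, pow_succ, mul_assoc] at h
  exact Nat.le_of_mul_le_mul_left h (by positivity)

lemma le_of_ceil_three_mul_sub_one_div_two_le {x y : ℕ}
    (h : ⌈(3 * (x : ℚ) - 1) / 2⌉ ≤ (y : ℤ)) : x ≤ y := by
  have hx : (x : ℤ) ≤ ⌈(3 * (x : ℚ) - 1) / 2⌉ := by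
    rw [Int.le_ceil_iff]
    push_cast
    linarith [(x.cast_nonneg : (0 : ℚ) ≤ x)]
  exact_mod_cast hx.trans h

lemma monotoneOn_Icc_of_two_mul_le (h12 : r 1 ≤ r 2)
    (hr : ∀ s, 2 ≤ s → s + 1 ≤ d → 2 * r s ≤ r (s + 1)) : MonotoneOn r (Set.Icc 1 d) :=
  monotoneOn_of_le_succ Set.ordConnected_Icc fun s _ hs hs' => by
    rw [Order.succ_eq_add_one] at hs' ⊢
    rcases Nat.lt_or_ge s 2 with h | h
    · obtain rfl : s = 1 := by have := hs.1; omega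
      exact h12
    · have := hr s h hs'.2
      omega

lemma add_le_of_two_mul_le (hmono : MonotoneOn r (Set.Icc 1 d))
    (hr : ∀ s, 2 ≤ s → s + 1 ≤ d → 2 * r s ≤ r (s + 1)) {a b c : ℕ} (ha : 2 ≤ a) (hb : 2 ≤ b)
    (hac : a < c) (hbc : b < c) (hc : c ≤ d) : r a + r b ≤ r c := by
  have hc' := hr (c - 1) (by omega) (by omega)
  rw [Nat.sub_add_cancel (by omega)] at hc'
  have ha' := hmono ⟨by omega, by omega⟩ ⟨by omega, by omega⟩ (Nat.le_sub_one_of_lt hac)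
  have hb' := hmono ⟨by omega, by omega⟩ ⟨by omega, by omega⟩ (Nat.le_sub_one_of_lt hbc)
  omega

lemma apply_sub_le_of_monotoneOn (hmono : MonotoneOn r (Set.Icc 1 d)) {j : ℕ} (hj : j < d) :
    r (d - j) ≤ r d :=
  hmono ⟨by omega, by omega⟩ ⟨by omega, le_rfl⟩ (Nat.sub_le d j)

lemma add_le_at_reflected_indices (hmono : MonotoneOn r (Set.Icc 1 d))
    (hr : ∀ s, 2 ≤ s → s + 1 ≤ d → 2 * r s ≤ r (s + 1)) {q : ℕ} (hq : q ≤ d) :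
    ∀ a b c, 0 < c → c < a → c < b → a < q → b < q →
      r (d - (a - 1)) + r (d - (b - 1)) ≤ r (d - (c - 1)) := fun a b c _ _ _ _ _ =>
  add_le_of_two_mul_le hmono hr (by omega) (by omega) (by omega) (by omega) (by omega)

lemma add_lt_at_reflected_indices (hmono : MonotoneOn r (Set.Icc 1 d)) {k q : ℕ} (hk : 2 * r d < k)
    (hq : q ≤ d) :
    ∀ a b, 0 < a → 0 < b → a < q → b < q → r (d - (a - 1)) + r (d - (b - 1)) < k :=
  fun a b _ _ _ _ => by
    have := apply_sub_le_of_monotoneOn hmono (j := a - 1) (by omega)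
    have := apply_sub_le_of_monotoneOn hmono (j := b - 1) (by omega)
    omega

end Chain

open MultiIndex in
theorem stmt15_general (d : ℕ) (r : ℕ → ℕ) (k : ℕ)
    (hceil2 : ⌈(3 * (r 1 : ℚ) - 1) / 2⌉ ≤ (r 2 : ℤ))
    (hchain : ∀ s, 2 ≤ s → s + 1 ≤ d →
      2 ^ (d - s) * r s ≤ 2 ^ (d - s - 1) * r (s + 1))
    (hk : 2 * r d + 1 ≤ k)
    (B : ℕ → ℕ → ℕ)
    (hB0 : ∀ n, B 0 n = 1)
    (hBcard : ∀ t n, 1 ≤ t → t ≤ d - 1 → n ≤ r (d - t) →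
      B t n = ((Finset.Nat.antidiagonalTuple (t + 1) (k - n)).filter
        (fun σ : Fin (t + 1) → ℕ =>
          ∀ E : Finset (Fin (t + 1)), E.Nonempty → E ≠ Finset.univ →
            (r (d - (E.card - 1)) : ℤ) - (n : ℤ) + 1 ≤ ∑ i ∈ Eᶜ, (σ i : ℤ))).card) :
    ∀ t n, 1 ≤ t → t ≤ d - 1 → n ≤ r (d - t) →
      (B t n : ℤ) = ((k - n + t).choose t : ℤ) -
        ∑ t' ∈ Finset.range t, ((t + 1).choose (t' + 1) : ℤ) *
          ∑ n' ∈ Finset.Icc n (r (d - t')),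
            ((n' - n + t - t' - 1).choose (t - t' - 1) : ℤ) * (B t' n' : ℤ) := by
  intro t n ht1 ht2 hn
  have hr := two_mul_le_succ_of_chain hchain
  have hmono := monotoneOn_Icc_of_two_mul_le (le_of_ceil_three_mul_sub_one_div_two_le hceil2) hr
  have hle_k : ∀ t' ≤ t, ∀ n' ≤ r (d - t'), n' ≤ k := fun t' ht' n' hn' => by
    have := apply_sub_le_of_monotoneOn hmono (j := t') (by omega)
    omega
  set θ : ℕ → ℕ := fun j => r (d - (j - 1))
  have hB : ∀ t' ≤ t, ∀ n' ≤ r (d - t'), B t' n' = #(admissible θ k (Fin (t' + 1)) (k - n')) := by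
    intro t' ht' n' hn'
    rcases Nat.eq_zero_or_pos t' with rfl | ht'0
    · rw [hB0, zero_add, admissible_of_subsingleton, card_piAntidiag_univ, Fintype.card_fin,
        Nat.multichoose_one]
    · rw [hBcard t' n' ht'0 (by omega) hn', ← piAntidiag_univ_fin_eq_antidiagonalTuple,
        admissible_eq_filter (hle_k t' ht' n' hn')]
  rw [hB t le_rfl n hn, card_admissible_eq_choose_sub_sum θ k (hle_k t le_rfl n hn)
    (add_le_at_reflected_indices hmono hr (by omega))
    (add_lt_at_reflected_indices hmono hk (by omega))
    (fun j hj => hle_k j hj.le _ le_rfl)]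
  refine congrArg _ (sum_congr rfl fun j hj => congrArg _ (sum_congr rfl fun n' hn' => ?_))
  rw [hB j (mem_range.1 hj).le n' (mem_Icc.1 hn').2]

/-- The stratum cardinalities `B_{t,n} = #Σ₀^{q_{t,n}}(I_t, k-n)` (with `B_{0,n} = 1`)
satisfy the recursion
`B_{t,n} = C(k-n+t, t) - ∑_{t'=0}^{t-1} C(t+1, t'+1) ∑_{n'=n}^{r_{d-t'}}
  C(n'-n+t-t'-1, t-t'-1) B_{t',n'}`. -/
theorem stmt15 (d : ℕ) (hd : 2 ≤ d) (r : ℕ → ℕ) (ρ k b : ℕ)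
    (hr1 : 1 ≤ r 1)
    (hceil1 : 1 ≤ ⌈(3 * (r 1 : ℚ) - 1) / 2⌉)
    (hceil2 : ⌈(3 * (r 1 : ℚ) - 1) / 2⌉ ≤ (r 2 : ℤ))
    (hr2 : (r 2 : ℤ) ≤ 2 * (r 1 : ℤ) - 1)
    (hchain : ∀ s, 2 ≤ s → s + 1 ≤ d →
      2 ^ (d - s) * r s ≤ 2 ^ (d - s - 1) * r (s + 1))
    (hk : 2 * r d + 1 ≤ k)
    (hρ : (ρ : ℤ) = (k : ℤ) - (b : ℤ))
    (hb1 : 2 * (r 1 : ℤ) - (r 2 : ℤ) ≤ (b : ℤ))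
    (hb2 : (b : ℤ) ≤ (r 2 : ℤ) - (r 1 : ℤ) + 1)
    (B : ℕ → ℕ → ℕ)
    (hB0 : ∀ n, B 0 n = 1)
    (hBcard : ∀ t n, 1 ≤ t → t ≤ d - 1 → n ≤ r (d - t) →
      B t n = ((Finset.Nat.antidiagonalTuple (t + 1) (k - n)).filter
        (fun σ : Fin (t + 1) → ℕ =>
          ∀ E : Finset (Fin (t + 1)), E.Nonempty → E ≠ Finset.univ →
            (r (d - (E.card - 1)) : ℤ) - (n : ℤ) + 1 ≤ ∑ i ∈ Eᶜ, (σ i : ℤ))).card) :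
    ∀ t n, 1 ≤ t → t ≤ d - 1 → n ≤ r (d - t) →
      (B t n : ℤ) = ((k - n + t).choose t : ℤ) -
        ∑ t' ∈ Finset.range t, ((t + 1).choose (t' + 1) : ℤ) *
          ∑ n' ∈ Finset.Icc n (r (d - t')),
            ((n' - n + t - t' - 1).choose (t - t' - 1) : ℤ) * (B t' n' : ℤ) :=
  stmt15_general d r k hceil2 hchain hk B hB0 hBcard
end

section
/- Under Assumption on (r, ρ, k, b), the following identity holds: C(k+d, d) − C(ρ+d, d) = Σ_{t=0}^{d−1} C(d, t+1) [ Σ_{n=0}^{r_{d−t}} C(n+d−t−1, d−t−1) B_{t,n} − Σ_{n=b}^{r_{d−t}} C(n−b+d−t−1, d−t−1) B_{t,n} ], where B_{t,n} are the stratum cardinalities defined by B_{0,n} = 1 and the recursion B_{t,n} = C(k−n+t, t) − Σ_{t'=0}^{t−1} C(t+1, t'+1) Σ_{n'=n}^{r_{d−t'}} C(n'−n+t−t'−1, t−t'−1) B_{t',n'}. -/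
/-!
By Pascal's rule `C(k+d,d) - C(ρ+d,d)` telescopes to `∑_{n<b} C(k-n+d-1, d-1)`, and the
recursion at the top stratum `t = d-1` writes each summand as `B_{d-1,n}` plus a combination of
the lower strata. After interchanging the sums over `n < b` and `n' ≥ n`, the coefficient of
`B_{t,n'}` is again a telescoping sum,
`∑_{n<b, n≤n'} C(n'-n+e-1, e-1) = C(n'+e, e) - C(n'-b+e, e)`
(the last term present only for `n' ≥ b`), which gives the terms `t < d-1`. The top stratum
contributes `∑_{n<b} B_{d-1,n} = ∑_{n≤r_1} B_{d-1,n} - ∑_{b≤n≤r_1} B_{d-1,n}`.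
-/

open Finset

theorem cast_choose_sub_choose_pred (c i : ℕ) (hi : 1 ≤ i) :
    ((i + (c + 1)).choose (c + 1) : ℤ) - ((i - 1 + (c + 1)).choose (c + 1) : ℤ) =
      ((i + c).choose c : ℤ) := by
  obtain ⟨j, rfl⟩ : ∃ j, i = j + 1 := ⟨i - 1, by omega⟩
  rw [Nat.add_sub_cancel, show j + 1 + (c + 1) = j + (c + 1) + 1 by omega, Nat.choose_succ_succ',
    show j + (c + 1) = j + 1 + c by omega]
  push_cast
  ring

theorem choose_add_succ_sub_choose_eq_sum_range (c k b : ℕ) (hb : b ≤ k) :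
    ((k + (c + 1)).choose (c + 1) : ℤ) - ((k - b + (c + 1)).choose (c + 1) : ℤ) =
      ∑ n ∈ range b, ((k - n + c).choose c : ℤ) := by
  have pascal : ∀ n ∈ range b, ((k - n + (c + 1)).choose (c + 1) : ℤ) -
      ((k - (n + 1) + (c + 1)).choose (c + 1) : ℤ) = ((k - n + c).choose c : ℤ) := by
    intro n hn
    rw [← cast_choose_sub_choose_pred c (k - n) (by grind)]
    rfl
  rw [← sum_congr rfl pascal, sum_range_sub', Nat.sub_zero]

theorem sum_Icc_choose_mul_sub_sum_Icc_succ (n R c : ℕ) (g : ℕ → ℤ) :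
    ∑ m ∈ Icc n R, ((m - n + (c + 1)).choose (c + 1) : ℤ) * g m -
      ∑ m ∈ Icc (n + 1) R, ((m - (n + 1) + (c + 1)).choose (c + 1) : ℤ) * g m =
      ∑ m ∈ Icc n R, ((m - n + c).choose c : ℤ) * g m := by
  rcases lt_or_ge R n with hR | hR
  · simp [Icc_eq_empty_of_lt hR, Icc_eq_empty_of_lt (hR.trans n.lt_succ_self)]
  have pascal : ∀ m ∈ Icc (n + 1) R, ((m - n + (c + 1)).choose (c + 1) : ℤ) * g m -
      ((m - (n + 1) + (c + 1)).choose (c + 1) : ℤ) * g m =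
        ((m - n + c).choose c : ℤ) * g m := by
    intro m hm
    rw [← sub_mul, ← cast_choose_sub_choose_pred c (m - n) (by grind)]
    rfl
  rw [← sum_Ioc_add_eq_sum_Icc hR, ← sum_Ioc_add_eq_sum_Icc hR, ← Icc_add_one_left_eq_Ioc,
    ← sum_congr rfl pascal, sum_sub_distrib]
  simp only [tsub_self, zero_add, Nat.choose_self, Nat.cast_one, one_mul]
  ring

theorem sum_range_sum_Icc_choose_mul (b R c : ℕ) (g : ℕ → ℤ) :
    ∑ n ∈ range b, ∑ m ∈ Icc n R, ((m - n + c).choose c : ℤ) * g m =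
      ∑ m ∈ Icc 0 R, ((m + (c + 1)).choose (c + 1) : ℤ) * g m -
        ∑ m ∈ Icc b R, ((m - b + (c + 1)).choose (c + 1) : ℤ) * g m := by
  rw [← sum_congr rfl fun n _ ↦ sum_Icc_choose_mul_sub_sum_Icc_succ n R c g, sum_range_sub'
    (fun n ↦ ∑ m ∈ Icc n R, ((m - n + (c + 1)).choose (c + 1) : ℤ) * g m)]
  simp only [Nat.sub_zero]

theorem sum_Icc_zero_sub_sum_Icc (f : ℕ → ℤ) {b R : ℕ} (hb : b ≤ R + 1) :
    ∑ n ∈ Icc 0 R, f n - ∑ n ∈ Icc b R, f n = ∑ n ∈ range b, f n := by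
  rw [← Ico_add_one_right_eq_Icc, ← Ico_add_one_right_eq_Icc, Nat.Ico_zero_eq_range,
    sum_Ico_eq_sub _ hb, sub_sub_cancel]

theorem choose_sub_choose_eq_of_recursion (c k b : ℕ) (hb : b ≤ k) (R : ℕ → ℕ)
    (B : ℕ → ℕ → ℤ)
    (hrec : ∀ n < b, B c n = ((k - n + c).choose c : ℤ) -
      ∑ t ∈ range c, ((c + 1).choose (t + 1) : ℤ) *
        ∑ m ∈ Icc n (R t), ((m - n + (c - t - 1)).choose (c - t - 1) : ℤ) * B t m) :
    ((k + (c + 1)).choose (c + 1) : ℤ) - ((k - b + (c + 1)).choose (c + 1) : ℤ) =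
      ∑ t ∈ range c, ((c + 1).choose (t + 1) : ℤ) *
        (∑ m ∈ Icc 0 (R t), ((m + (c - t)).choose (c - t) : ℤ) * B t m -
          ∑ m ∈ Icc b (R t), ((m - b + (c - t)).choose (c - t) : ℤ) * B t m) +
        ∑ n ∈ range b, B c n := by
  have swap : ∀ t ∈ range c, ∑ n ∈ range b, ((c + 1).choose (t + 1) : ℤ) *
      ∑ m ∈ Icc n (R t), ((m - n + (c - t - 1)).choose (c - t - 1) : ℤ) * B t m =
      ((c + 1).choose (t + 1) : ℤ) *
        (∑ m ∈ Icc 0 (R t), ((m + (c - t)).choose (c - t) : ℤ) * B t m -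
          ∑ m ∈ Icc b (R t), ((m - b + (c - t)).choose (c - t) : ℤ) * B t m) := by
    intro t ht
    rw [← mul_sum, sum_range_sum_Icc_choose_mul, 
      Nat.sub_add_cancel (Nat.sub_pos_of_lt (mem_range.mp ht))]
  rw [choose_add_succ_sub_choose_eq_sum_range c k b hb,
    sum_congr rfl fun n hn ↦ eq_add_of_sub_eq' (hrec n (mem_range.mp hn)).symm,
    sum_add_distrib, sum_comm, sum_congr rfl swap, add_comm]

theorem stmt16_general (d : ℕ) (hd : 2 ≤ d) (r : ℕ → ℕ) (ρ k b : ℕ)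
    (hr2 : (r 2 : ℤ) ≤ 2 * (r 1 : ℤ) - 1)
    (hρ : (ρ : ℤ) = (k : ℤ) - (b : ℤ))
    (hb2 : (b : ℤ) ≤ (r 2 : ℤ) - (r 1 : ℤ) + 1)
    (B : ℕ → ℕ → ℤ)
    (hBrec : ∀ t n, 1 ≤ t → t ≤ d - 1 → n ≤ r (d - t) →
      B t n = ((k - n + t).choose t : ℤ) -
        ∑ t' ∈ Finset.range t, ((t + 1).choose (t' + 1) : ℤ) *
          ∑ n' ∈ Finset.Icc n (r (d - t')),
            ((n' - n + t - t' - 1).choose (t - t' - 1) : ℤ) * B t' n') :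
    ((k + d).choose d : ℤ) - ((ρ + d).choose d : ℤ) =
      ∑ t ∈ Finset.range d, (d.choose (t + 1) : ℤ) *
        ((∑ n ∈ Finset.Icc 0 (r (d - t)),
            ((n + (d - t - 1)).choose (d - t - 1) : ℤ) * B t n) -
         (∑ n ∈ Finset.Icc b (r (d - t)),
            ((n - b + (d - t - 1)).choose (d - t - 1) : ℤ) * B t n)) := by
  obtain ⟨c, rfl⟩ : ∃ c, d = c + 1 := ⟨d - 1, by omega⟩
  obtain rfl : ρ = k - b := by omega
  have hrec : ∀ n < b, B c n = ((k - n + c).choose c : ℤ) -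
      ∑ t ∈ range c, ((c + 1).choose (t + 1) : ℤ) *
        ∑ m ∈ Icc n (r (c + 1 - t)),
          ((m - n + (c - t - 1)).choose (c - t - 1) : ℤ) * B t m := by
    intro n hn
    rw [hBrec c n (by omega) le_rfl (by rw [Nat.add_sub_cancel_left]; omega)]
    congr 1
    refine sum_congr rfl fun t ht ↦ ?_
    have ht := mem_range.mp ht
    simp only [show ∀ m, m - n + c - t - 1 = m - n + (c - t - 1) from fun m ↦ by omega]
  have hsub : ∀ t, c + 1 - t - 1 = c - t := fun t ↦ by omega
  rw [choose_sub_choose_eq_of_recursion c k b (by omega) _ B hrec, sum_range_succ]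
  simp only [hsub, Nat.add_sub_cancel_left, Nat.choose_self, Nat.sub_self, add_zero,
    Nat.choose_zero_right, Nat.cast_one, one_mul,
    sum_Icc_zero_sub_sum_Icc _ (show b ≤ r 1 + 1 by omega)]

/-- Under Assumption 1.1, with `B_{t,n}` defined by `B_{0,n} = 1` and the recursion of
Lemma 7.3, the identity
`C(k+d,d) - C(ρ+d,d) = ∑_{t=0}^{d-1} C(d,t+1) [∑_{n=0}^{r_{d-t}} C(n+d-t-1,d-t-1) B_{t,n}
  - ∑_{n=b}^{r_{d-t}} C(n-b+d-t-1,d-t-1) B_{t,n}]` holds. -/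
theorem stmt16 (d : ℕ) (hd : 2 ≤ d) (r : ℕ → ℕ) (ρ k b : ℕ)
    (hr1 : 1 ≤ r 1)
    (hceil1 : 1 ≤ ⌈(3 * (r 1 : ℚ) - 1) / 2⌉)
    (hceil2 : ⌈(3 * (r 1 : ℚ) - 1) / 2⌉ ≤ (r 2 : ℤ))
    (hr2 : (r 2 : ℤ) ≤ 2 * (r 1 : ℤ) - 1)
    (hchain : ∀ s, 2 ≤ s → s + 1 ≤ d →
      2 ^ (d - s) * r s ≤ 2 ^ (d - s - 1) * r (s + 1))
    (hk : 2 * r d + 1 ≤ k)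
    (hρ : (ρ : ℤ) = (k : ℤ) - (b : ℤ))
    (hb1 : 2 * (r 1 : ℤ) - (r 2 : ℤ) ≤ (b : ℤ))
    (hb2 : (b : ℤ) ≤ (r 2 : ℤ) - (r 1 : ℤ) + 1)
    (B : ℕ → ℕ → ℤ)
    (hB0 : ∀ n, B 0 n = 1)
    (hBrec : ∀ t n, 1 ≤ t → t ≤ d - 1 → n ≤ r (d - t) →
      B t n = ((k - n + t).choose t : ℤ) -
        ∑ t' ∈ Finset.range t, ((t + 1).choose (t' + 1) : ℤ) *
          ∑ n' ∈ Finset.Icc n (r (d - t')),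
            ((n' - n + t - t' - 1).choose (t - t' - 1) : ℤ) * B t' n') :
    ((k + d).choose d : ℤ) - ((ρ + d).choose d : ℤ) =
      ∑ t ∈ Finset.range d, (d.choose (t + 1) : ℤ) *
        ((∑ n ∈ Finset.Icc 0 (r (d - t)),
            ((n + (d - t - 1)).choose (d - t - 1) : ℤ) * B t n) -
         (∑ n ∈ Finset.Icc b (r (d - t)),
            ((n - b + (d - t - 1)).choose (d - t - 1) : ℤ) * B t n)) :=
  stmt16_general d hd r ρ k b hr2 hρ hb2 B hBrec
end
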